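/- arXiv:2201.06377 — 11 statements merged into one kernel-verified Lean document; each statement's English description precedes it below -/
import Mathlib

section
/- Let K be a number field and let α ∈ K be nonzero. Suppose there exists a field embedding σ : K → ℂ such that |σ(α)| = 1. Then α⁻¹ is also a root of the minimal polynomial of α over ℚ; in other words, α is a reciprocal algebraic number. -/
open NumberField

/-- Let `K` be a number field and `α ∈ K` nonzero. If there is a field
embedding `σ : K → ℂ` with `|σ α| = 1`, then `α⁻¹` is also a root of the minimal polynomial
of `α` over `ℚ`, i.e. `α` is a reciprocal algebraic number. -/
theorem reciprocal_of_exists_embedding_abs_eq_one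
    (K : Type*) [Field K] [NumberField K] (α : K) (hα : α ≠ 0)
    (h : ∃ σ : K →+* ℂ, ‖σ α‖ = 1) :
    Polynomial.aeval α⁻¹ (minpoly ℚ α) = 0 := by
  obtain ⟨σ, hσ⟩ := h
  set p := minpoly ℚ α with hp
  have hinv : (σ α)⁻¹ = starRingEnd ℂ (σ α) := by
    have hm : σ α * starRingEnd ℂ (σ α) = 1 := by
      rw [Complex.mul_conj, Complex.normSq_eq_norm_sq, hσ]
      norm_num
    exact inv_eq_of_mul_eq_one_right hm
  have e1 : σ (Polynomial.aeval α⁻¹ p) = Polynomial.aeval ((σ α)⁻¹) p := by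
    simpa using (Polynomial.aeval_algHom_apply σ.toRatAlgHom α⁻¹ p).symm
  have e2 : Polynomial.aeval (starRingEnd ℂ (σ α)) p = starRingEnd ℂ (Polynomial.aeval (σ α) p) := by
    simpa using Polynomial.aeval_algHom_apply (starRingEnd ℂ).toRatAlgHom (σ α) p
  have e3 : Polynomial.aeval (σ α) p = σ (Polynomial.aeval α p) := by
    simpa using Polynomial.aeval_algHom_apply σ.toRatAlgHom α p
  have key : σ (Polynomial.aeval α⁻¹ p) = 0 := by
    rw [e1, hinv, e2, e3, hp, minpoly.aeval, map_zero, map_zero]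
  exact σ.injective (by simpa using key)
end

section
/- Let α be an algebraic number with α ∉ ℚ such that α⁻¹ is a root of the minimal polynomial of α over ℚ (i.e., α is reciprocal). Then the degree [ℚ(α) : ℚ] of α over ℚ is even. -/
open Polynomial

/-- Let `α` be an algebraic number, `α ∉ ℚ`, such that `α⁻¹` is a root of the
minimal polynomial of `α` over `ℚ` (i.e. `α` is reciprocal). Then the degree `[ℚ(α) : ℚ]` of
`α` over `ℚ` is even. -/
theorem even_degree_of_reciprocal_irrational
    (α : ℂ) (halg : IsAlgebraic ℚ α)
    (hirr : α ∉ Set.range ((↑) : ℚ → ℂ))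
    (hrec : Polynomial.aeval α⁻¹ (minpoly ℚ α) = 0) :
    Even (minpoly ℚ α).natDegree := by
  set p := minpoly ℚ α with hp
  have hint : IsIntegral ℚ α := halg.isIntegral
  have hα0 : α ≠ 0 := by rintro rfl; exact hirr ⟨0, by simp⟩
  have hc0 : p.coeff 0 ≠ 0 := minpoly.coeff_zero_ne_zero hint hα0
  have hpmonic : p.Monic := minpoly.monic hint
  have hp0 : p ≠ 0 := hpmonic.ne_zero
  have hirred : Irreducible p := minpoly.irreducible hint
  -- p has no rational roots
  have hnoroot : ∀ r : ℚ, p.eval r ≠ 0 := by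
    intro r hr
    have hdvd : (X - C r) ∣ p := dvd_iff_isRoot.mpr hr
    obtain ⟨q, hq⟩ := hdvd
    have hq0 : q ≠ 0 := by
      rintro rfl; exact hp0 (by simpa using hq)
    rcases hirred.isUnit_or_isUnit hq with h | h
    · exact (not_isUnit_X_sub_C r) h
    · have hqd : q.natDegree = 0 := natDegree_eq_zero_of_isUnit h
      have hd1 : p.natDegree = 1 := by
        rw [hq, natDegree_mul (X_sub_C_ne_zero r) hq0, natDegree_X_sub_C, hqd]
      have : α ∈ (algebraMap ℚ ℂ).range := minpoly.natDegree_eq_one_iff.mp hd1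
      obtain ⟨s, hs⟩ := this
      exact hirr ⟨s, hs⟩
  -- α is a root of the reverse polynomial
  have hrev0 : Polynomial.aeval α p.reverse = 0 := by
    haveI : Invertible (α⁻¹ : ℂ) := invertibleOfNonzero (inv_ne_zero hα0)
    have h := (eval₂_reverse_eq_zero_iff (algebraMap ℚ ℂ) α⁻¹ p).mpr
      (by rwa [aeval_def] at hrec)
    rw [aeval_def]
    have hinv : (⅟ (α⁻¹ : ℂ)) = α := by rw [invOf_eq_inv, inv_inv]
    rwa [hinv] at h
  have hdvd : p ∣ p.reverse := minpoly.dvd ℚ α hrev0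
  obtain ⟨q, hq⟩ := hdvd
  have hrevne : p.reverse ≠ 0 := fun h => hp0 (reverse_eq_zero.mp h)
  have hq0 : q ≠ 0 := by rintro rfl; exact hrevne (by simpa using hq)
  have hrevdeg : p.reverse.natDegree = p.natDegree := by
    rw [reverse_natDegree, natTrailingDegree_eq_zero.mpr (Or.inr hc0), Nat.sub_zero]
  have hqdeg : q.natDegree = 0 := by
    have := congrArg natDegree hq
    rw [hrevdeg, natDegree_mul hp0 hq0] at this
    omega
  obtain ⟨c, rfl⟩ : ∃ c : ℚ, q = C c := ⟨q.coeff 0, eq_C_of_natDegree_eq_zero hqdeg⟩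
  -- evaluating the reverse at nonzero x : eval x p.reverse * ... ; at x = 1 gives c = 1
  have heval : ∀ x : ℚ, x ≠ 0 → p.reverse.eval x⁻¹ * x ^ p.natDegree = p.eval x := by
    intro x hx
    haveI : Invertible x := invertibleOfNonzero hx
    have h := eval₂_reverse_mul_pow (RingHom.id ℚ) x p
    rw [invOf_eq_inv] at h; exact h
  have hc1 : c = 1 := by
    have h := heval 1 one_ne_zero
    rw [inv_one, one_pow, mul_one, hq, eval_mul, eval_C] at h
    exact mul_left_cancel₀ (hnoroot 1) (h.trans (mul_one _).symm)
  rw [hc1, map_one, mul_one] at hq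
  -- now p.reverse = p ; evaluate at -1
  rcases Nat.even_or_odd p.natDegree with he | ho
  · exact he
  · exfalso
    have h := heval (-1) (by norm_num)
    rw [hq, Odd.neg_one_pow ho] at h
    norm_num at h
    exact hnoroot (-1) (by linarith)
end

section
/- Let K be a number field and let u ∈ 𝓞_K^× be a unit of the ring of integers of K which is not a root of unity. Then for any two field embeddings σ, τ : K → ℂ one has τ(u) · σ(u)² ≠ 1. -/
open NumberField Polynomial IntermediateField

/-- If `τ(v)·σ(v)² = 1` for one pair of embeddings, then for *every* embedding `ρ` the value
`(ρ v)⁻¹ ^ 2` is again a conjugate of `v`. -/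
theorem aux_key (K : Type*) [Field K] [NumberField K] (v : K)
    (σ τ : K →+* ℂ) (hrel : τ v * (σ v) ^ 2 = 1) (ρ : K →+* ℂ) :
    ∃ ρ' : K →+* ℂ, ρ' v = ((ρ v)⁻¹) ^ 2 := by
  have hint : IsIntegral ℚ v := IsIntegral.of_finite ℚ v
  have root_of : ∀ φ : K →+* ℂ, aeval (φ v) (minpoly ℚ v) = 0 := by
    intro φ
    have := Polynomial.aeval_algHom_apply φ.toRatAlgHom v (minpoly ℚ v)
    rw [minpoly.aeval, map_zero] at this
    exact this
  set p := minpoly ℚ v with hp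
  have hz₀ : aeval (σ v) p = 0 := root_of σ
  have hz₀int : IsIntegral ℚ (σ v) := ⟨p, minpoly.monic hint, by rwa [← aeval_def]⟩
  have hmin : p = minpoly ℚ (σ v) :=
    minpoly.eq_of_irreducible_of_monic (minpoly.irreducible hint) hz₀ (minpoly.monic hint)
  have hz : aeval (ρ v) p = 0 := root_of ρ
  have hzmem : ρ v ∈ (minpoly ℚ (σ v)).aroots ℂ := by
    rw [← hmin]
    exact Polynomial.mem_aroots.mpr ⟨minpoly.ne_zero hint, hz⟩
  set ψ := (IntermediateField.algHomAdjoinIntegralEquiv ℚ hz₀int).symm ⟨ρ v, hzmem⟩ with hψ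
  have hψgen : ψ (AdjoinSimple.gen ℚ (σ v)) = ρ v :=
    IntermediateField.algHomAdjoinIntegralEquiv_symm_apply_gen ℚ hz₀int _
  set g : ℚ⟮σ v⟯ := AdjoinSimple.gen ℚ (σ v) with hg
  have hgcoe : (g : ℂ) = σ v := rfl
  have hz₀ne : σ v ≠ 0 := by
    intro h
    rw [h] at hrel
    simp at hrel
  have hτ : τ v = ((σ v)⁻¹) ^ 2 := by
    field_simp
    linear_combination hrel
  set w : ℚ⟮σ v⟯ := (g⁻¹) ^ 2 with hwdef
  have hwcoe : (w : ℂ) = τ v := by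
    push_cast [hwdef, hτ, hgcoe]
    rfl
  have hτroot : aeval (τ v) p = 0 := root_of τ
  have hwroot : aeval w p = 0 := by
    apply (algebraMap ℚ⟮σ v⟯ ℂ).injective
    rw [map_zero, ← Polynomial.aeval_algebraMap_apply]
    simpa [hwcoe] using hτroot
  have hψw : aeval (ψ w) p = 0 := by
    rw [Polynomial.aeval_algHom_apply, hwroot, map_zero]
  have hψwval : ψ w = ((ρ v)⁻¹) ^ 2 := by
    rw [hwdef, map_pow, map_inv₀, hψgen]
  have hmem : ((ρ v)⁻¹) ^ 2 ∈ p.rootSet ℂ :=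
    Polynomial.mem_rootSet.mpr ⟨minpoly.ne_zero hint, by rwa [← hψwval]⟩
  have := (NumberField.Embeddings.range_eval_eq_rootSet_minpoly K ℂ v).symm ▸ hmem
  obtain ⟨ρ', hρ'⟩ := this
  exact ⟨ρ', hρ'⟩

/-- Let `K` be a number field and `u` a unit of its ring of integers which is
not a root of unity. Then for any two field embeddings `σ, τ : K → ℂ` one has
`τ(u) · σ(u)² ≠ 1`. -/
theorem no_relation_tau_sigma_sq
    (K : Type*) [Field K] [NumberField K] (u : (𝓞 K)ˣ)
    (hu : ∀ n : ℕ, 0 < n → u ^ n ≠ 1)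
    (σ τ : K →+* ℂ) :
    τ (algebraMap (𝓞 K) K u) * (σ (algebraMap (𝓞 K) K u)) ^ 2 ≠ 1 := by
  intro hrel
  set v : K := algebraMap (𝓞 K) K u with hv
  have hv0 : v ≠ 0 := by
    simp [hv, map_ne_zero_iff _ NumberField.RingOfIntegers.coe_injective]
  have key := aux_key K v σ τ hrel
  have key4 : ∀ ρ : K →+* ℂ, ∃ ρ'' : K →+* ℂ, ρ'' v = (ρ v) ^ 4 := by
    intro ρ
    obtain ⟨ρ', h1⟩ := key ρ
    obtain ⟨ρ'', h2⟩ := key ρ'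
    refine ⟨ρ'', ?_⟩
    have hz : ρ v ≠ 0 := (map_ne_zero ρ).mpr hv0
    rw [h2, h1]
    field_simp
  -- all conjugates have absolute value 1
  have hones : ∀ φ : K →+* ℂ, ‖φ v‖ = 1 := by
    obtain ⟨ρM, -, hM⟩ := Finset.exists_max_image Finset.univ
      (fun ρ : K →+* ℂ => ‖ρ v‖) Finset.univ_nonempty
    obtain ⟨ρm, -, hm⟩ := Finset.exists_min_image Finset.univ
      (fun ρ : K →+* ℂ => ‖ρ v‖) Finset.univ_nonempty
    have hMpos : 0 < ‖ρM v‖ := norm_pos_iff.mpr ((map_ne_zero ρM).mpr hv0)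
    have hmpos : 0 < ‖ρm v‖ := norm_pos_iff.mpr ((map_ne_zero ρm).mpr hv0)
    have hM1 : ‖ρM v‖ ≤ 1 := by
      obtain ⟨ρ'', h⟩ := key4 ρM
      have h4 := hM ρ'' (Finset.mem_univ _)
      rw [h, norm_pow] at h4
      by_contra hc
      push_neg at hc
      have := pow_lt_pow_right₀ hc (show 1 < 4 by norm_num)
      rw [pow_one] at this
      linarith
    have hm1 : 1 ≤ ‖ρm v‖ := by
      obtain ⟨ρ'', h⟩ := key4 ρm
      have h4 := hm ρ'' (Finset.mem_univ _)
      rw [h, norm_pow] at h4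
      by_contra hc
      push_neg at hc
      have := pow_lt_pow_right_of_lt_one₀ hmpos hc (show 1 < 4 by norm_num)
      rw [pow_one] at this
      linarith
    intro φ
    refine le_antisymm (le_trans (hM φ (Finset.mem_univ _)) hM1)
      (le_trans hm1 (hm φ (Finset.mem_univ _)))
  obtain ⟨n, hn, hvn⟩ := NumberField.Embeddings.pow_eq_one_of_norm_eq_one K ℂ
    (NumberField.RingOfIntegers.isIntegral_coe (u : 𝓞 K)) hones
  refine hu n hn (Units.ext ?_)
  push_cast
  apply NumberField.RingOfIntegers.coe_injective
  rw [map_pow, map_one]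
  exact hvn
end

section
/- Let s, t be integers with 1 ≤ s ≤ t, let K be a number field of degree s+2t with exactly s real embeddings and 2t complex (non-real) embeddings, equipped with an admissible labeling σ_1, …, σ_{s+2t} of its embeddings. If u ∈ 𝓞_K^× is a unit with u ∉ ℚ satisfying conditions (★), then σ_{s+j}(u) is non-real for every j ∈ {1, …, t}. -/
open NumberField

/-- An *admissible labeling* of the embeddings of a number field `K` with `s` real and `2t`
complex (non-real) embeddings: an enumeration `σ 0, …, σ (s+2t-1)` of all field embeddings
`K → ℂ` such that `σ 0, …, σ (s-1)` are exactly the real embeddings and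
`σ (s+t+j) = conj ∘ σ (s+j)` for `j = 0, …, t-1`.  (Indices are `0`-based.) -/
structure AdmissibleLabeling (K : Type*) [Field K] (s t : ℕ) where
  σ : ℕ → (K →+* ℂ)
  inj : ∀ i < s + 2 * t, ∀ j < s + 2 * t, σ i = σ j → i = j
  surj : ∀ φ : K →+* ℂ, ∃ i < s + 2 * t, σ i = φ
  isReal : ∀ i < s, ComplexEmbedding.IsReal (σ i)
  notReal : ∀ i, s ≤ i → i < s + 2 * t → ¬ ComplexEmbedding.IsReal (σ i)
  conjRel : ∀ j < t, σ (s + t + j) = ComplexEmbedding.conjugate (σ (s + j))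

/-- A unit `u ∈ 𝓞_K^×` satisfies *conditions (★)* w.r.t. an admissible labeling if
`σ_j(u)·|σ_{s+j}(u)|² = 1` for every `j ∈ {0,…,s-1}` and `|σ_{s+j}(u)| = 1` for every
`j ∈ {s,…,t-1}` (0-based indices). -/
def StarCond {K : Type*} [Field K] {s t : ℕ}
    (L : AdmissibleLabeling K s t) (u : (𝓞 K)ˣ) : Prop :=
  (∀ j < s, L.σ j (algebraMap (𝓞 K) K u) *
      (‖L.σ (s + j) (algebraMap (𝓞 K) K u)‖ : ℂ) ^ 2 = 1) ∧
  (∀ j, s ≤ j → j < t → ‖L.σ (s + j) (algebraMap (𝓞 K) K u)‖ = 1)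

open Polynomial IntermediateField in
/-- If `b` is a conjugate of `a` over `ℚ`, then `(b^2)⁻¹` is a conjugate of `(a^2)⁻¹`. -/
private lemma conj_step (a b : ℂ) (ha : IsIntegral ℚ a)
    (hab : minpoly ℚ b = minpoly ℚ a) :
    minpoly ℚ ((b ^ 2)⁻¹) = minpoly ℚ ((a ^ 2)⁻¹) := by
  have hb : b ∈ (minpoly ℚ a).aroots ℂ := by
    rw [Polynomial.mem_aroots]
    exact ⟨minpoly.ne_zero ha, by rw [← hab]; exact minpoly.aeval ℚ b⟩
  set ψ : ℚ⟮a⟯ →ₐ[ℚ] ℂ := (IntermediateField.algHomAdjoinIntegralEquiv ℚ ha).symm ⟨b, hb⟩ with hψdef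
  have hψ : ψ (IntermediateField.AdjoinSimple.gen ℚ a) = b :=
    IntermediateField.algHomAdjoinIntegralEquiv_symm_apply_gen ℚ ha ⟨b, hb⟩
  have hinj : Function.Injective ψ := ψ.toRingHom.injective
  have hval : Function.Injective (ℚ⟮a⟯.val) := (ℚ⟮a⟯.val).toRingHom.injective
  set z : ℚ⟮a⟯ := ((IntermediateField.AdjoinSimple.gen ℚ a) ^ 2)⁻¹ with hzdef
  have h1 : minpoly ℚ ((a ^ 2)⁻¹) = minpoly ℚ z := by
    have hz : (ℚ⟮a⟯.val) z = (a ^ 2)⁻¹ := by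
      simp [hzdef, map_inv₀, map_pow]
    rw [← hz]; exact minpoly.algHom_eq _ hval z
  have h2 : minpoly ℚ ((b ^ 2)⁻¹) = minpoly ℚ z := by
    have hz : ψ z = (b ^ 2)⁻¹ := by
      simp [hzdef, map_inv₀, map_pow, hψ]
    rw [← hz, minpoly.algHom_eq _ hinj]
  rw [h1, h2]

open Polynomial in
/-- If `(a^2)⁻¹` is a conjugate of the nonzero algebraic number `a` over `ℚ`,
then `|a| = 1`.  (Otherwise iterating `c ↦ (c^2)⁻¹` produces infinitely many conjugates
of pairwise distinct absolute values.) -/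
private lemma abs_eq_one_of_minpoly_inv_sq (a : ℂ) (ha : IsIntegral ℚ a) (ha0 : a ≠ 0)
    (h : minpoly ℚ ((a ^ 2)⁻¹) = minpoly ℚ a) : ‖a‖ = 1 := by
  by_contra hA
  set p := minpoly ℚ a with hpdef
  have hp0 : p ≠ 0 := minpoly.ne_zero ha
  set A := ‖a‖ with hAdef
  have hApos : 0 < A := by
    simpa [hAdef] using (norm_pos_iff.mpr ha0)
  have key : ∀ k : ℕ, ∃ c : ℂ, minpoly ℚ c = p ∧
      (‖c‖ = A ^ (2 ^ k) ∨ ‖c‖ = A⁻¹ ^ (2 ^ k)) := by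
    intro k
    induction k with
    | zero => exact ⟨a, rfl, Or.inl (by norm_num [hAdef])⟩
    | succ n ih =>
      obtain ⟨c, hc, habs⟩ := ih
      have hcI : IsIntegral ℚ c := minpoly.ne_zero_iff.mp (by rw [hc]; exact hp0)
      have hc0 : c ≠ 0 := by
        rintro rfl
        rw [norm_zero] at habs
        rcases habs with h' | h' <;>
          exact absurd h'.symm (by positivity)
      have hca : ‖(c ^ 2)⁻¹‖ = (‖c‖⁻¹) ^ 2 := by
        rw [norm_inv, norm_pow, inv_pow]
      refine ⟨(c ^ 2)⁻¹, ?_, ?_⟩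
      · rw [conj_step a c ha hc, h]
      · rcases habs with h' | h'
        · right
          rw [hca, h', ← inv_pow, ← pow_mul, pow_succ]
        · left
          rw [hca, h', ← inv_pow, inv_inv, ← pow_mul, pow_succ]
  choose f hf1 hf2 using key
  have hmem : ∀ k, f k ∈ p.rootSet ℂ := by
    intro k
    rw [Polynomial.mem_rootSet]
    exact ⟨hp0, by rw [← hf1 k]; exact minpoly.aeval ℚ (f k)⟩
  have hlog : ∀ k, |Real.log ‖f k‖| = (2 ^ k : ℕ) * |Real.log A| := by
    intro k
    rcases hf2 k with h' | h'
    · rw [h', Real.log_pow, abs_mul, Nat.abs_cast]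
    · rw [h', Real.log_pow, Real.log_inv, abs_mul, abs_neg, Nat.abs_cast]
  have hlogA : |Real.log A| ≠ 0 := by
    simp only [ne_eq, abs_eq_zero]
    rw [Real.log_eq_zero]
    push_neg
    exact ⟨ne_of_gt hApos, hA, by nlinarith⟩
  have hinj : Function.Injective f := by
    intro k l hkl
    have h1 := hlog k
    rw [hkl, hlog l] at h1
    have h2 : ((2 ^ k : ℕ) : ℝ) = ((2 ^ l : ℕ) : ℝ) := mul_right_cancel₀ hlogA h1.symm
    have h3 : (2:ℕ) ^ k = 2 ^ l := by exact_mod_cast h2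
    exact Nat.pow_right_injective le_rfl h3
  exact (Set.infinite_of_injective_forall_mem hinj hmem) (Polynomial.rootSet_finite p ℂ)

/-- Let `1 ≤ s ≤ t`, let `K` be a number field of degree `s+2t` with an
admissible labeling of its embeddings.  If `u ∈ 𝓞_K^×` is a unit with `u ∉ ℚ` satisfying
conditions (★), then `σ (s+j) u` is non-real for every `j < t`. -/
theorem nonreal_of_starCond
    (s t : ℕ) (hs : 1 ≤ s) (hst : s ≤ t)
    (K : Type*) [Field K] [NumberField K]
    (hdeg : Module.finrank ℚ K = s + 2 * t)
    (L : AdmissibleLabeling K s t) (u : (𝓞 K)ˣ)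
    (hu : algebraMap (𝓞 K) K u ∉ Set.range (algebraMap ℚ K))
    (hstar : StarCond L u) :
    ∀ j < t, (L.σ (s + j) (algebraMap (𝓞 K) K u)).im ≠ 0 := by
  obtain ⟨hstar1, hstar2⟩ := hstar
  intro j hjt him
  set x : K := algebraMap (𝓞 K) K u with hxdef
  have hxint : IsIntegral ℚ x := IsIntegral.of_finite ℚ x
  have hxne : ∀ q : ℚ, x ≠ algebraMap ℚ K q := fun q hq => hu ⟨q, hq.symm⟩
  set a : ℂ := L.σ (s + j) x with hadef
  have hare : a = (a.re : ℂ) := Complex.ext rfl (by simpa using him)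
  have hfin : ‖a‖ = 1 → False := by
    intro h1
    have : |a.re| = 1 := by
      rw [hare, Complex.norm_real, Real.norm_eq_abs] at h1
      exact h1
    rcases abs_eq (by norm_num : (0:ℝ) ≤ 1) |>.mp this with h2 | h2
    · have : a = 1 := by rw [hare, h2]; norm_num
      have hx1 : x = 1 := (L.σ (s + j)).injective (by rw [← hadef, this, map_one])
      exact hxne 1 (by rw [hx1, map_one])
    · have : a = -1 := by rw [hare, h2]; norm_num
      have hx1 : x = -1 := (L.σ (s + j)).injective (by rw [← hadef, this, map_neg, map_one])
      exact hxne (-1) (by rw [hx1, map_neg, map_one])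
  by_cases hjs : s ≤ j
  · exact hfin (hstar2 j hjs hjt)
  · push_neg at hjs
    have h2 := hstar1 j hjs
    have habs2 : ((‖a‖ : ℂ)) ^ 2 = a ^ 2 := by
      rw [hare, Complex.norm_real, Real.norm_eq_abs]
      norm_cast
      rw [sq_abs]
    rw [habs2] at h2
    have ha0 : a ≠ 0 := by
      intro h0
      rw [h0] at h2
      simp at h2
    have hj2 : L.σ j x = (a ^ 2)⁻¹ := eq_inv_of_mul_eq_one_left h2
    have hminx : ∀ i : ℕ, minpoly ℚ (L.σ i x) = minpoly ℚ x := fun i =>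
      minpoly.algHom_eq (L.σ i).toRatAlgHom (L.σ i).injective x
    have hmin : minpoly ℚ ((a ^ 2)⁻¹) = minpoly ℚ a := by
      rw [← hj2, hminx j, hadef, hminx (s + j)]
    have haint : IsIntegral ℚ a := by
      rw [hadef]
      exact hxint.map (L.σ (s + j)).toRatAlgHom
    exact hfin (abs_eq_one_of_minpoly_inv_sq a haint ha0 hmin)
end

section
/- Let s, t be integers with 1 ≤ s < t, let K be a number field of degree s+2t with exactly s real embeddings and 2t complex (non-real) embeddings, equipped with an admissible labeling σ_1, …, σ_{s+2t} of its embeddings. If u ∈ 𝓞_K^× is a unit satisfying conditions (★), then ∏_{j=1}^{s} σ_j(u) = 1. -/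
open NumberField

section Aux

open Polynomial IntermediateField

/-- Transfer between multiset filter cards and finset filter cards over `univ`. -/
private lemma aux_card_univ_filter {γ : Type*} [Fintype γ] (p : γ → Prop) [DecidablePred p] :
    Multiset.card (Multiset.filter p Finset.univ.val) = (Finset.univ.filter p).card := rfl

private lemma aux_countP_range (n : ℕ) (q : ℕ → Prop) [DecidablePred q] :
    Multiset.countP q (Multiset.range n) = ((Finset.range n).filter q).card := by
  rw [Multiset.countP_eq_card_filter, ← Finset.range_val, ← Finset.filter_val]
  rfl

private lemma aux_cardfilter_range (n : ℕ) (q : ℕ → Prop) [DecidablePred q] :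
    Multiset.card (Multiset.filter q (Multiset.range n)) = ((Finset.range n).filter q).card := by
  rw [← Multiset.countP_eq_card_filter]
  exact aux_countP_range n q

private lemma aux_count_range (n : ℕ) (g : ℕ → ℝ) (y : ℝ) :
    Multiset.count y ((Multiset.range n).map g)
      = ((Finset.range n).filter (fun j => g j = y)).card := by
  classical
  rw [Multiset.count_map]
  have h : Multiset.filter (fun a => y = g a) (Multiset.range n)
      = Multiset.filter (fun a => g a = y) (Multiset.range n) :=
    Multiset.filter_congr (fun j _ => eq_comm)
  rw [h]
  exact aux_cardfilter_range n _

/-- Shift the index of a filter-count over an interval. -/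
private lemma aux_card_Ico_shift (a n : ℕ) (P : ℕ → Prop) [DecidablePred P] :
    ((Finset.Ico a (a + n)).filter P).card
      = ((Finset.range n).filter (fun j => P (a + j))).card := by
  apply Finset.card_bij' (fun i _ => i - a) (fun j _ => a + j)
  · intro i hi
    simp only [Finset.mem_filter, Finset.mem_Ico] at hi
    simp only [Finset.mem_filter, Finset.mem_range]
    have h : a + (i - a) = i := by omega
    exact ⟨by omega, by rw [h]; exact hi.2⟩
  · intro j hj
    simp only [Finset.mem_filter, Finset.mem_range] at hj
    simp only [Finset.mem_filter, Finset.mem_Ico]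
    exact ⟨⟨by omega, by omega⟩, hj.2⟩
  · intro i hi
    simp only [Finset.mem_filter, Finset.mem_Ico] at hi
    omega
  · intro j _
    omega

variable {K : Type*} [Field K] [NumberField K]

/-- Every embedding sends `x` to a root of its minimal polynomial. -/
private lemma aux_root (x : K) (σ : K →+* ℂ) :
    (Polynomial.aeval (σ x)) (minpoly ℚ x) = 0 := by
  have h := Polynomial.aeval_algHom_apply σ.toRatAlgHom x (minpoly ℚ x)
  rw [minpoly.aeval, map_zero] at h
  exact h

/-- The number of embeddings sending `x` to a fixed root `r`, times the degree of the
minimal polynomial of `x`, equals the degree of the field. -/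
private lemma aux_count (x : K) (r : ℂ)
    (hr : (Polynomial.aeval r) (minpoly ℚ x) = 0) :
    (Finset.univ.filter (fun σ : K →+* ℂ => σ x = r)).card * (minpoly ℚ x).natDegree
      = Module.finrank ℚ K := by
  classical
  have hx : IsIntegral ℚ x := IsIntegral.of_finite ℚ x
  have hmem : r ∈ (minpoly ℚ x).aroots ℂ := by
    rw [Polynomial.mem_aroots]
    exact ⟨minpoly.ne_zero hx, hr⟩
  set φ : ℚ⟮x⟯ →ₐ[ℚ] ℂ := (IntermediateField.algHomAdjoinIntegralEquiv ℚ hx).symm ⟨r, hmem⟩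
    with hφdef
  have hφ : φ (IntermediateField.AdjoinSimple.gen ℚ x) = r :=
    IntermediateField.algHomAdjoinIntegralEquiv_symm_apply_gen ℚ hx ⟨r, hmem⟩
  letI : Algebra ℚ⟮x⟯ ℂ := φ.toRingHom.toAlgebra
  haveI : IsScalarTower ℚ ℚ⟮x⟯ ℂ :=
    IsScalarTower.of_algebraMap_eq (fun q => (φ.commutes q).symm)
  have e : (K →ₐ[ℚ⟮x⟯] ℂ) ≃ {σ : K →+* ℂ // σ x = r} :=
    { toFun := fun ψ => ⟨(ψ.restrictScalars ℚ).toRingHom, by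
        have hx' : algebraMap ℚ⟮x⟯ K (IntermediateField.AdjoinSimple.gen ℚ x) = x :=
          IntermediateField.AdjoinSimple.algebraMap_gen ℚ x
        show ψ x = r
        calc ψ x = ψ (algebraMap ℚ⟮x⟯ K (IntermediateField.AdjoinSimple.gen ℚ x)) := by
              rw [hx']
          _ = algebraMap ℚ⟮x⟯ ℂ (IntermediateField.AdjoinSimple.gen ℚ x) := ψ.commutes _
          _ = r := hφ⟩
      invFun := fun σp => by
        refine ⟨⟨σp.1.toMonoidHom, σp.1.map_zero, σp.1.map_add⟩, ?_⟩
        intro g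
        have key : (σp.1.toRatAlgHom.comp (IsScalarTower.toAlgHom ℚ ℚ⟮x⟯ K)) = φ := by
          apply PowerBasis.algHom_ext (IntermediateField.adjoin.powerBasis hx)
          rw [IntermediateField.adjoin.powerBasis_gen]; refine Eq.trans ?_ hφ.symm
          show σp.1 (algebraMap ℚ⟮x⟯ K (IntermediateField.AdjoinSimple.gen ℚ x)) = r
          rw [IntermediateField.AdjoinSimple.algebraMap_gen ℚ x]
          exact σp.2
        exact congrArg (fun ψ => ψ g) key
      left_inv := fun ψ => by ext y; rfl
      right_inv := fun σp => by ext y; rfl }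
  have hcard1 : (Finset.univ.filter (fun σ : K →+* ℂ => σ x = r)).card
      = Fintype.card (K →ₐ[ℚ⟮x⟯] ℂ) := by
    rw [← Fintype.card_subtype]
    exact (Fintype.card_congr e).symm
  rw [hcard1, AlgHom.card ℚ⟮x⟯ K ℂ, ← IntermediateField.adjoin.finrank hx, mul_comm]
  exact Module.finrank_mul_finrank ℚ ℚ⟮x⟯ K

/-- If `x` and `x⁻¹` have the same minimal polynomial, the value counting functions of the
embeddings agree. -/
private lemma aux_count_eq (x : K) (hmin : minpoly ℚ x⁻¹ = minpoly ℚ x) (r : ℂ) :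
    (Finset.univ.filter (fun σ : K →+* ℂ => σ x = r)).card
      = (Finset.univ.filter (fun σ : K →+* ℂ => σ x⁻¹ = r)).card := by
  classical
  by_cases hr : (Polynomial.aeval r) (minpoly ℚ x) = 0
  · have h1 := aux_count x r hr
    have h2 := aux_count x⁻¹ r (by rw [hmin]; exact hr)
    rw [hmin] at h2
    have hd : 0 < (minpoly ℚ x).natDegree :=
      minpoly.natDegree_pos (IsIntegral.of_finite ℚ x)
    exact Nat.eq_of_mul_eq_mul_right hd (h1.trans h2.symm)
  · have h1 : (Finset.univ.filter (fun σ : K →+* ℂ => σ x = r)) = ∅ := by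
      apply Finset.filter_eq_empty_iff.mpr
      intro σ _ h
      exact hr (h ▸ aux_root x σ)
    have h2 : (Finset.univ.filter (fun σ : K →+* ℂ => σ x⁻¹ = r)) = ∅ := by
      apply Finset.filter_eq_empty_iff.mpr
      intro σ _ h
      apply hr
      rw [← hmin]
      exact h ▸ aux_root x⁻¹ σ
    rw [h1, h2]

end Aux

/-- Let `1 ≤ s < t`, let `K` be a number field of degree `s+2t` with an
admissible labeling of its embeddings.  If `u ∈ 𝓞_K^×` satisfies conditions (★), then
`∏_{j=0}^{s-1} σ_j(u) = 1`. -/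
theorem prod_real_embeddings_eq_one_of_starCond
    (s t : ℕ) (hs : 1 ≤ s) (hst : s < t)
    (K : Type*) [Field K] [NumberField K]
    (hdeg : Module.finrank ℚ K = s + 2 * t)
    (L : AdmissibleLabeling K s t) (u : (𝓞 K)ˣ)
    (hstar : StarCond L u) :
    ∏ j ∈ Finset.range s, L.σ j (algebraMap (𝓞 K) K u) = 1 := by
  classical
  obtain ⟨hstar1, hstar2⟩ := hstar
  set α : K := algebraMap (𝓞 K) K (u : 𝓞 K) with hα
  -- `a² = c²` with both positive implies `a = c`
  have hsqeq : ∀ a c : ℝ, 0 < a → 0 < c → a ^ 2 = c ^ 2 → a = c := by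
    intro a c ha hc h
    apply le_antisymm <;> nlinarith
  -- basic facts about α
  have huu : (u : 𝓞 K) * ((u⁻¹ : (𝓞 K)ˣ) : 𝓞 K) = 1 := by
    rw [← Units.val_mul, mul_inv_cancel, Units.val_one]
  have hmul : α * algebraMap (𝓞 K) K ((u⁻¹ : (𝓞 K)ˣ) : 𝓞 K) = 1 := by
    rw [hα, ← map_mul, huu, map_one]
  have hα0 : α ≠ 0 := left_ne_zero_of_mul_eq_one hmul
  have hint : IsIntegral ℚ α := IsIntegral.of_finite ℚ α
  set p : Polynomial ℚ := minpoly ℚ α with hp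
  -- a conjugate of modulus one
  set b : ℂ := L.σ (s + s) α with hb
  have hb1 : ‖b‖ = 1 := hstar2 s le_rfl hst
  have hb0 : b ≠ 0 := by
    intro h
    rw [h] at hb1
    simp at hb1
  have hbc : b⁻¹ = (starRingEnd ℂ) b := by
    apply inv_eq_of_mul_eq_one_right
    rw [Complex.mul_conj, Complex.normSq_eq_norm_sq, hb1]
    norm_num
  have hrootb : (Polynomial.aeval b) p = 0 := aux_root α (L.σ (s + s))
  have hrootbinv : (Polynomial.aeval b⁻¹) p = 0 := by
    rw [hbc]
    have h := Polynomial.aeval_algHom_apply ((starRingEnd ℂ) : ℂ →+* ℂ).toRatAlgHom b p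
    rw [show (((starRingEnd ℂ) : ℂ →+* ℂ).toRatAlgHom b) = (starRingEnd ℂ) b from rfl] at h
    rw [h, hrootb, map_zero]
  -- minimal polynomial is (anti)reciprocal: p ∣ reverse p
  have hdvd : p ∣ p.reverse := by
    by_contra hndvd
    have hcop : IsCoprime p p.reverse :=
      ((minpoly.irreducible hint).coprime_iff_not_dvd).mpr hndvd
    have hmapped := hcop.map ((Polynomial.aeval b).toRingHom : Polynomial ℚ →+* ℂ)
    have hrev0 : (Polynomial.aeval b) p.reverse = 0 := by
      haveI : Invertible (b⁻¹) := invertibleOfNonzero (inv_ne_zero hb0)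
      have hiff := Polynomial.eval₂_reverse_eq_zero_iff (algebraMap ℚ ℂ) (b⁻¹) p
      rw [invOf_eq_inv, inv_inv] at hiff
      rw [Polynomial.aeval_def]
      exact hiff.mpr (by rw [← Polynomial.aeval_def]; exact hrootbinv)
    have hz : IsCoprime (0 : ℂ) 0 := by
      rw [show ((Polynomial.aeval b).toRingHom p : ℂ) = 0 from hrootb,
        show ((Polynomial.aeval b).toRingHom p.reverse : ℂ) = 0 from hrev0] at hmapped
      exact hmapped
    rw [isCoprime_zero_left] at hz
    exact not_isUnit_zero hz
  have hrootαinv : (Polynomial.aeval α⁻¹) p = 0 := by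
    obtain ⟨c, hc⟩ := hdvd
    have h1 : (Polynomial.aeval α) p.reverse = 0 := by
      rw [hc, map_mul]
      rw [hp, minpoly.aeval, zero_mul]
    haveI : Invertible (α⁻¹) := invertibleOfNonzero (inv_ne_zero hα0)
    have hiff := Polynomial.eval₂_reverse_eq_zero_iff (algebraMap ℚ K) (α⁻¹) p
    rw [invOf_eq_inv, inv_inv] at hiff
    rw [Polynomial.aeval_def]
    exact hiff.mp (by rw [← Polynomial.aeval_def]; exact h1)
  have hpinv : minpoly ℚ α⁻¹ = p :=
    (minpoly.eq_of_irreducible_of_monic (minpoly.irreducible hint) hrootαinv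
      (minpoly.monic hint)).symm
  -- counting embeddings by value
  have hcard := aux_count_eq α hpinv
  -- the multiset of values of embeddings
  set M : Multiset ℂ := Finset.univ.val.map (fun σ : K →+* ℂ => σ α) with hM
  have hMM : M = Finset.univ.val.map (fun σ : K →+* ℂ => σ α⁻¹) := by
    apply Multiset.ext.mpr
    intro r
    rw [hM, Multiset.count_map, Multiset.count_map]
    have e1 : ∀ y : K, Multiset.filter (fun σ : K →+* ℂ => r = σ y) Finset.univ.val
        = Multiset.filter (fun σ : K →+* ℂ => σ y = r) Finset.univ.val :=
      fun y => Multiset.filter_congr (fun σ _ => eq_comm)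
    rw [e1 α, e1 α⁻¹, aux_card_univ_filter (fun σ : K →+* ℂ => σ α = r),
      aux_card_univ_filter (fun σ : K →+* ℂ => σ α⁻¹ = r), hcard r]
  -- counting by modulus is inversion invariant
  have hNinv : ∀ ρ : ℝ, M.countP (fun z => ‖z‖ = ρ)
      = M.countP (fun z => ‖z‖ = ρ⁻¹) := by
    intro ρ
    conv_lhs => rw [hMM]
    have h2 : (Finset.univ.val.map (fun σ : K →+* ℂ => σ α⁻¹)) = M.map (·⁻¹) := by
      rw [hM, Multiset.map_map]
      apply Multiset.map_congr rfl
      intro σ _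
      simp [map_inv₀]
    rw [h2, Multiset.countP_map, ← Multiset.countP_eq_card_filter]
    apply Multiset.countP_congr rfl
    intro z _
    rw [norm_inv]
    exact propext inv_eq_iff_eq_inv
  -- express counting function through the labeling
  have huniv : (Finset.univ : Finset (K →+* ℂ)).val = (Multiset.range (s + 2 * t)).map L.σ := by
    have hnodup : ((Multiset.range (s + 2 * t)).map L.σ).Nodup := by
      apply Multiset.Nodup.map_on
      · intro i hi j hj h
        exact L.inj i (by simpa using hi) j (by simpa using hj) h
      · exact Multiset.nodup_range _
    set S : Finset (K →+* ℂ) := ⟨(Multiset.range (s + 2 * t)).map L.σ, hnodup⟩ with hS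
    have hScard : S.card = Fintype.card (K →+* ℂ) := by
      rw [NumberField.Embeddings.card K ℂ, hdeg]
      show Multiset.card ((Multiset.range (s + 2 * t)).map L.σ) = s + 2 * t
      rw [Multiset.card_map, Multiset.card_range]
    have hSuniv : S = Finset.univ := Finset.eq_univ_of_card S hScard
    rw [← hSuniv]
  set β : ℕ → ℝ := fun j => ‖L.σ (s + j) α‖ with hβ
  have hβpos : ∀ j, 0 < β j := by
    intro j
    apply norm_pos_iff.mpr
    intro h
    exact hα0 ((L.σ (s + j)).injective (by rw [h, map_zero]))
  set A : ℝ → ℕ := fun y => ((Finset.range s).filter (fun j => β j = y)).card with hA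
  -- bridge: modulus count via the labeling
  have hcount : ∀ ρ : ℝ, M.countP (fun z => ‖z‖ = ρ)
      = ((Finset.range (s + 2 * t)).filter (fun i => ‖L.σ i α‖ = ρ)).card := by
    intro ρ
    rw [hM, huniv, Multiset.map_map, Multiset.countP_map]
    exact aux_cardfilter_range _ _
  -- split the count into the three blocks
  have hsplit : ∀ ρ : ℝ,
      ((Finset.range (s + 2 * t)).filter (fun i => ‖L.σ i α‖ = ρ)).card
        = ((Finset.range s).filter (fun j => ‖L.σ j α‖ = ρ)).card
          + ((Finset.range t).filter (fun j => β j = ρ)).card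
          + ((Finset.range t).filter (fun j => β j = ρ)).card := by
    intro ρ
    have hd1 : Disjoint (Finset.range s) (Finset.Ico s (s + t)) := by
      rw [Finset.range_eq_Ico]
      exact Finset.Ico_disjoint_Ico_consecutive 0 s (s + t)
    have hAC : Disjoint (Finset.range s) (Finset.Ico (s + t) (s + 2 * t)) := by
      rw [Finset.disjoint_left]
      intro a ha hb
      rw [Finset.mem_range] at ha
      rw [Finset.mem_Ico] at hb
      omega
    have hBC : Disjoint (Finset.Ico s (s + t)) (Finset.Ico (s + t) (s + 2 * t)) :=
      Finset.Ico_disjoint_Ico_consecutive s (s + t) (s + 2 * t)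
    have hU : Finset.range (s + 2 * t)
        = (Finset.range s ∪ Finset.Ico s (s + t)) ∪ Finset.Ico (s + t) (s + 2 * t) := by
      rw [Finset.range_eq_Ico,
        ← Finset.Ico_union_Ico_eq_Ico (Nat.zero_le (s + t)) (by omega : s + t ≤ s + 2 * t),
        ← Finset.Ico_union_Ico_eq_Ico (Nat.zero_le s) (by omega : s ≤ s + t),
        ← Finset.range_eq_Ico]
    have hd2' : Disjoint
        (Finset.filter (fun i => ‖L.σ i α‖ = ρ) (Finset.range s)
          ∪ Finset.filter (fun i => ‖L.σ i α‖ = ρ) (Finset.Ico s (s + t)))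
        (Finset.filter (fun i => ‖L.σ i α‖ = ρ)
          (Finset.Ico (s + t) (s + 2 * t))) :=
      Finset.disjoint_union_left.mpr
        ⟨Finset.disjoint_filter_filter hAC, Finset.disjoint_filter_filter hBC⟩
    rw [hU, Finset.filter_union, Finset.filter_union,
      Finset.card_union_of_disjoint hd2',
      Finset.card_union_of_disjoint (Finset.disjoint_filter_filter hd1)]
    have hpart2 : ((Finset.Ico s (s + t)).filter (fun i => ‖L.σ i α‖ = ρ)).card
        = ((Finset.range t).filter (fun j => β j = ρ)).card := by
      rw [aux_card_Ico_shift s t]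
    have hpart3 : ((Finset.Ico (s + t) (s + 2 * t)).filter
          (fun i => ‖L.σ i α‖ = ρ)).card
        = ((Finset.range t).filter (fun j => β j = ρ)).card := by
      have h23 : Finset.Ico (s + t) (s + 2 * t) = Finset.Ico (s + t) ((s + t) + t) := by
        congr 1
        omega
      rw [h23, aux_card_Ico_shift (s + t) t]
      congr 1
      apply Finset.filter_congr
      intro j hj
      have hjt : j < t := Finset.mem_range.mp hj
      rw [L.conjRel j hjt, NumberField.ComplexEmbedding.conjugate_coe_eq, Complex.norm_conj]
    rw [hpart2, hpart3]
  -- values on the first block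
  have hval : ∀ j < s, ‖L.σ j α‖ = (β j ^ 2)⁻¹ := by
    intro j hj
    have h1 := hstar1 j hj
    have h2 : L.σ j α = (((β j : ℝ) : ℂ) ^ 2)⁻¹ := eq_inv_of_mul_eq_one_left h1
    rw [h2, norm_inv, norm_pow, Complex.norm_of_nonneg (le_of_lt (hβpos j))]
  have hblock1 : ∀ ρ : ℝ, ((Finset.range s).filter
        (fun j => ‖L.σ j α‖ = ρ)).card
      = ((Finset.range s).filter (fun j => (β j ^ 2)⁻¹ = ρ)).card := by
    intro ρ
    congr 1
    apply Finset.filter_congr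
    intro j hj
    rw [hval j (Finset.mem_range.mp hj)]
  -- the key functional equation
  have hNA : ∀ x : ℝ, 0 < x →
      A x + 2 * (((Finset.range t).filter (fun j => β j = x⁻¹ ^ 2)).card)
        = A x⁻¹ + 2 * (((Finset.range t).filter (fun j => β j = x ^ 2)).card) := by
    intro x hx
    have hfirst : ((Finset.range s).filter (fun j => (β j ^ 2)⁻¹ = x⁻¹ ^ 2)).card = A x := by
      rw [hA]
      congr 1
      apply Finset.filter_congr
      intro j _
      constructor
      · intro h
        have h2 : β j ^ 2 = x ^ 2 := by
          rw [← inv_inv (β j ^ 2), h, inv_pow, inv_inv]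
        exact hsqeq _ _ (hβpos j) hx h2
      · intro h
        rw [h, inv_pow]
    have hfirst' : ((Finset.range s).filter (fun j => (β j ^ 2)⁻¹ = x ^ 2)).card = A x⁻¹ := by
      rw [hA]
      congr 1
      apply Finset.filter_congr
      intro j _
      constructor
      · intro h
        have h2 : β j ^ 2 = x⁻¹ ^ 2 := by
          rw [← inv_inv (β j ^ 2), h, inv_pow]
        exact hsqeq _ _ (hβpos j) (by positivity) h2
      · intro h
        rw [h, inv_pow, inv_inv]
    have hmain := hNinv (x⁻¹ ^ 2)
    rw [hcount, hcount] at hmain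
    have hρ : ((x⁻¹ : ℝ) ^ 2)⁻¹ = x ^ 2 := by
      rw [inv_pow, inv_inv]
    rw [hρ] at hmain
    rw [hsplit, hsplit, hblock1, hblock1, hfirst, hfirst'] at hmain
    omega
  -- reduce the filter over range t to range s
  have hBsplit : ∀ ρ : ℝ, ((Finset.range t).filter (fun j => β j = ρ)).card
      = A ρ + ((Finset.Ico s t).filter (fun j => β j = ρ)).card := by
    intro ρ
    have hd1 : Disjoint (Finset.range s) (Finset.Ico s t) := by
      rw [Finset.range_eq_Ico]
      exact Finset.Ico_disjoint_Ico_consecutive 0 s t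
    have hU : Finset.range t = Finset.range s ∪ Finset.Ico s t := by
      rw [Finset.range_eq_Ico,
        ← Finset.Ico_union_Ico_eq_Ico (Nat.zero_le s) (le_of_lt hst), ← Finset.range_eq_Ico]
    rw [hU, Finset.filter_union,
      Finset.card_union_of_disjoint (Finset.disjoint_filter_filter hd1)]
  have hIco : ∀ x : ℝ, 0 < x → ((Finset.Ico s t).filter (fun j => β j = x⁻¹ ^ 2)).card
      = ((Finset.Ico s t).filter (fun j => β j = x ^ 2)).card := by
    intro x hx
    by_cases hx1 : x = 1
    · rw [hx1]
      norm_num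
    · have h1 : ((Finset.Ico s t).filter (fun j => β j = x⁻¹ ^ 2)) = ∅ := by
        apply Finset.filter_eq_empty_iff.mpr
        intro j hj h
        obtain ⟨hjs, hjt⟩ := Finset.mem_Ico.mp hj
        have hβj : β j = 1 := hstar2 j hjs hjt
        rw [hβj] at h
        have hxinv : x⁻¹ = 1 := hsqeq x⁻¹ 1 (by positivity) one_pos (by rw [← h]; norm_num)
        exact hx1 (inv_eq_one.mp hxinv)
      have h2 : ((Finset.Ico s t).filter (fun j => β j = x ^ 2)) = ∅ := by
        apply Finset.filter_eq_empty_iff.mpr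
        intro j hj h
        obtain ⟨hjs, hjt⟩ := Finset.mem_Ico.mp hj
        have hβj : β j = 1 := hstar2 j hjs hjt
        rw [hβj] at h
        exact hx1 (hsqeq x 1 hx one_pos (by rw [← h]; norm_num))
      rw [h1, h2]
  -- the difference function D satisfies D x = 2 * D (x^2)
  have hD : ∀ x : ℝ, 0 < x → (A x : ℤ) - A x⁻¹ = 2 * ((A (x ^ 2) : ℤ) - A ((x ^ 2)⁻¹)) := by
    intro x hx
    have h1 := hNA x hx
    rw [hBsplit, hBsplit, hIco x hx] at h1
    have h2 : (x⁻¹ : ℝ) ^ 2 = (x ^ 2)⁻¹ := by rw [inv_pow]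
    rw [h2] at h1
    omega
  -- iterate
  have hDk : ∀ k : ℕ, ∀ x : ℝ, 0 < x →
      (A x : ℤ) - A x⁻¹ = 2 ^ k * ((A (x ^ 2 ^ k) : ℤ) - A ((x ^ 2 ^ k)⁻¹)) := by
    intro k
    induction k with
    | zero => intro x _; simp
    | succ k ih =>
      intro x hx
      rw [ih x hx, hD (x ^ 2 ^ k) (by positivity)]
      have h3 : (x ^ 2 ^ k) ^ 2 = x ^ 2 ^ (k + 1) := by
        rw [← pow_mul, pow_succ]
      rw [h3]
      ring
  -- a bound on the support of A
  set C : ℝ := (∑ j ∈ Finset.range s, (β j + (β j)⁻¹)) + 2 with hC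
  have hCb : ∀ j ∈ Finset.range s, β j ≤ C ∧ (β j)⁻¹ ≤ C := by
    intro j hj
    have hle : β j + (β j)⁻¹ ≤ ∑ i ∈ Finset.range s, (β i + (β i)⁻¹) := by
      apply Finset.single_le_sum (f := fun i => β i + (β i)⁻¹) _ hj
      intro i _
      have h1 := hβpos i
      have h2 : 0 < (β i)⁻¹ := by positivity
      linarith
    have h1 := hβpos j
    have h2 : 0 < (β j)⁻¹ := by positivity
    constructor
    · rw [hC]; linarith
    · rw [hC]; linarith
  have hA0 : ∀ x : ℝ, C < x → A x = 0 ∧ A x⁻¹ = 0 := by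
    intro x hx
    constructor
    · rw [hA, Finset.card_eq_zero]
      apply Finset.filter_eq_empty_iff.mpr
      intro j hj h
      have h1 := (hCb j hj).1
      rw [h] at h1
      linarith
    · rw [hA, Finset.card_eq_zero]
      apply Finset.filter_eq_empty_iff.mpr
      intro j hj h
      have h2 := (hCb j hj).2
      rw [h, inv_inv] at h2
      linarith
  -- conclude A x = A x⁻¹ for x > 1
  have hAsym : ∀ x : ℝ, 1 < x → A x = A x⁻¹ := by
    intro x hx
    have hxpos : 0 < x := by linarith
    obtain ⟨n, hn⟩ := pow_unbounded_of_one_lt C hx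
    have hnn : C < x ^ 2 ^ n := by
      calc C < x ^ n := hn
        _ ≤ x ^ 2 ^ n := by
            apply pow_le_pow_right₀ (le_of_lt hx)
            exact Nat.le_of_lt (Nat.lt_two_pow_self)
    obtain ⟨hz1, hz2⟩ := hA0 (x ^ 2 ^ n) hnn
    have hfin := hDk n x hxpos
    rw [hz1, hz2] at hfin
    simp only [Nat.cast_zero, sub_zero, sub_self, mul_zero] at hfin
    omega
  -- now conclude A y = A y⁻¹ for all y
  have hAsym' : ∀ y : ℝ, A y = A y⁻¹ := by
    intro y
    rcases lt_trichotomy y 1 with hy | hy | hy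
    · rcases le_or_gt y 0 with hy0 | hy0
      · have h1 : A y = 0 := by
          rw [hA, Finset.card_eq_zero]
          apply Finset.filter_eq_empty_iff.mpr
          intro j _ h
          have h3 := hβpos j
          rw [h] at h3
          linarith
        have h2 : A y⁻¹ = 0 := by
          rw [hA, Finset.card_eq_zero]
          apply Finset.filter_eq_empty_iff.mpr
          intro j _ h
          have h3 := hβpos j
          have h4 : y⁻¹ ≤ 0 := inv_nonpos.mpr hy0
          rw [h] at h3
          linarith
        rw [h1, h2]
      · have hy1 : 1 < y⁻¹ := (one_lt_inv₀ hy0).mpr hy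
        have h1 := hAsym y⁻¹ hy1
        rw [inv_inv] at h1
        exact h1.symm
    · rw [hy]
      norm_num
    · exact hAsym y hy
  -- the product of the β's equals 1
  set BM : Multiset ℝ := (Multiset.range s).map β with hBM
  have hBMsym : BM.map (·⁻¹) = BM := by
    apply Multiset.ext.mpr
    intro y
    rw [hBM, Multiset.map_map]
    rw [show ((fun x => x⁻¹) ∘ β) = (fun j => (β j)⁻¹) from rfl]
    rw [aux_count_range s (fun j => (β j)⁻¹) y, aux_count_range s β y]
    have h1 : ((Finset.range s).filter (fun j => (β j)⁻¹ = y)).card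
        = ((Finset.range s).filter (fun j => β j = y⁻¹)).card := by
      congr 1
      apply Finset.filter_congr
      intro j _
      exact inv_eq_iff_eq_inv
    rw [h1]
    exact (hAsym' y⁻¹).trans (congrArg A (inv_inv y))
  have hBMprod : BM.prod = 1 := by
    have h1 : BM.prod⁻¹ = BM.prod := by
      conv_rhs => rw [← hBMsym]
      rw [show ((·⁻¹) : ℝ → ℝ) = Inv.inv from rfl, Multiset.prod_map_inv']
    have h2 : 0 < BM.prod := by
      apply Multiset.prod_pos
      intro a ha
      rw [hBM] at ha
      obtain ⟨j, _, hj⟩ := Multiset.mem_map.mp ha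
      rw [← hj]
      exact hβpos j
    have h3 : BM.prod * BM.prod = 1 := by
      nth_rewrite 1 [← h1]
      exact inv_mul_cancel₀ (ne_of_gt h2)
    rcases mul_self_eq_one_iff.mp h3 with h | h
    · exact h
    · linarith
  have hprodβ : ∏ j ∈ Finset.range s, β j = 1 := by
    have h1 : ∏ j ∈ Finset.range s, β j = BM.prod := by
      rw [hBM, ← Finset.range_val]
      rfl
    rw [h1, hBMprod]
  -- final computation
  calc ∏ j ∈ Finset.range s, L.σ j α
      = ∏ j ∈ Finset.range s, (((β j : ℝ) : ℂ) ^ 2)⁻¹ := by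
        apply Finset.prod_congr rfl
        intro j hj
        exact eq_inv_of_mul_eq_one_left (hstar1 j (Finset.mem_range.mp hj))
    _ = ((∏ j ∈ Finset.range s, ((β j : ℝ) : ℂ)) ^ 2)⁻¹ := by
        rw [Finset.prod_inv_distrib, Finset.prod_pow]
    _ = 1 := by
        rw [← Complex.ofReal_prod, hprodβ]
        norm_num
end

section
/- Let s, t be integers with 1 ≤ s < t, let K be a number field of degree s+2t with exactly s real embeddings and 2t complex (non-real) embeddings, equipped with an admissible labeling σ_1, …, σ_{s+2t} of its embeddings. If u_1, …, u_s ∈ 𝓞_K^× are units each satisfying conditions (★), then the s×s real matrix (log σ_j(u_i))_{1 ≤ i, j ≤ s} is singular (its determinant is zero). In particular, there is no subgroup U of 𝓞_K^× of rank s all of whose elements satisfy conditions (★). -/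
open NumberField

section Helpers

set_option linter.unusedSectionVars false

variable {K : Type*} [Field K] [NumberField K] {s t : ℕ}

lemma emb_ne_zero (φ : K →+* ℂ) (u : (𝓞 K)ˣ) :
    φ (algebraMap (𝓞 K) K u) ≠ 0 := by
  have h : φ (algebraMap (𝓞 K) K u) * φ (algebraMap (𝓞 K) K ↑u⁻¹) = 1 := by
    rw [← map_mul, ← map_mul, ← Units.val_mul, mul_inv_cancel, Units.val_one, map_one, map_one]
  exact left_ne_zero_of_mul_eq_one h

lemma emb_inv (φ : K →+* ℂ) (u : (𝓞 K)ˣ) :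
    φ (algebraMap (𝓞 K) K ↑u⁻¹) = (φ (algebraMap (𝓞 K) K u))⁻¹ := by
  have h : φ (algebraMap (𝓞 K) K u) * φ (algebraMap (𝓞 K) K ↑u⁻¹) = 1 := by
    rw [← map_mul, ← map_mul, ← Units.val_mul, mul_inv_cancel, Units.val_one, map_one, map_one]
  exact (inv_eq_of_mul_eq_one_right h).symm

/-- the set of units satisfying (★) is a subgroup -/
def starSubgroup (L : AdmissibleLabeling K s t) : Subgroup (𝓞 K)ˣ where
  carrier := {u | StarCond L u}
  one_mem' := by
    constructor
    · intro j hj; simp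
    · intro j hj1 hj2; simp
  mul_mem' := by
    rintro u v ⟨hu1, hu2⟩ ⟨hv1, hv2⟩
    constructor
    · intro j hj
      have h1 := hu1 j hj
      have h2 := hv1 j hj
      simp only [Units.val_mul, map_mul, norm_mul, Complex.ofReal_mul, mul_pow]
      linear_combination (L.σ j (algebraMap (𝓞 K) K v) *
        (‖L.σ (s + j) (algebraMap (𝓞 K) K v)‖ : ℂ) ^ 2) * h1 + h2
    · intro j hj1 hj2
      have h1 := hu2 j hj1 hj2
      have h2 := hv2 j hj1 hj2
      simp only [Units.val_mul, map_mul, norm_mul, h1, h2, mul_one]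
  inv_mem' := by
    rintro u ⟨hu1, hu2⟩
    constructor
    · intro j hj
      have h1 := hu1 j hj
      rw [emb_inv, emb_inv, norm_inv, Complex.ofReal_inv, inv_pow, ← mul_inv, h1, inv_one]
    · intro j hj1 hj2
      rw [emb_inv, norm_inv, hu2 j hj1 hj2, inv_one]

lemma log_abs_prod_zpow (φ : K →+* ℂ) (n : Fin s → ℤ) (u : Fin s → (𝓞 K)ˣ) :
    Real.log (‖φ (algebraMap (𝓞 K) K ↑(∏ i, u i ^ n i))‖) =
      ∑ i, (n i : ℝ) * Real.log (‖φ (algebraMap (𝓞 K) K (u i))‖) := by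
  let F : (𝓞 K)ˣ →* ℂˣ := Units.map ((φ.comp (algebraMap (𝓞 K) K)).toMonoidHom)
  have hF : ∀ w : (𝓞 K)ˣ, φ (algebraMap (𝓞 K) K ↑w) = ↑(F w) := fun w => rfl
  rw [hF, map_prod]
  have hcoe : ((∏ i, F (u i ^ n i) : ℂˣ) : ℂ) = ∏ i, ((F (u i ^ n i) : ℂˣ) : ℂ) :=
    map_prod (Units.coeHom ℂ) _ _
  rw [hcoe, norm_prod, Real.log_prod
    (fun i _ => norm_ne_zero_iff.mpr (Units.ne_zero _))]
  refine Finset.sum_congr rfl fun i _ => ?_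
  rw [map_zpow F, Units.val_zpow_eq_zpow_val, norm_zpow, Real.log_zpow, hF (u i)]

lemma star_real (L : AdmissibleLabeling K s t) {u : (𝓞 K)ˣ} (hu : StarCond L u)
    {j : ℕ} (hj : j < s) :
    0 < (L.σ j (algebraMap (𝓞 K) K u)).re ∧
    ‖L.σ j (algebraMap (𝓞 K) K u)‖ = (L.σ j (algebraMap (𝓞 K) K u)).re ∧
    ‖L.σ j (algebraMap (𝓞 K) K u)‖ *
      (‖L.σ (s + j) (algebraMap (𝓞 K) K u)‖) ^ 2 = 1 := by
  set z : K := algebraMap (𝓞 K) K u with hz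
  have h1 := hu.1 j hj
  have him : (L.σ j z).im = 0 := by
    have h := RingHom.congr_fun (L.isReal j hj) z
    exact Complex.conj_eq_iff_im.mp h
  set B : ℝ := ‖L.σ (s + j) z‖ with hB
  have hBpos : 0 < B := norm_pos_iff.mpr (emb_ne_zero _ u)
  have hre : (L.σ j z).re * B ^ 2 = 1 := by
    have h2 : L.σ j z * (((B ^ 2 : ℝ)) : ℂ) = 1 := by
      rw [Complex.ofReal_pow]; exact h1
    have h3 := congrArg Complex.re h2
    simpa [Complex.mul_re, him, ← Complex.ofReal_pow] using h3
  have hrepos : 0 < (L.σ j z).re := by nlinarith [sq_nonneg B]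
  have hofre : L.σ j z = (((L.σ j z).re : ℝ) : ℂ) := by
    apply Complex.ext
    · rfl
    · simp [him]
  have habs : ‖L.σ j z‖ = (L.σ j z).re := by
    conv_lhs => rw [hofre]
    rw [Complex.norm_real, Real.norm_eq_abs, abs_of_pos hrepos]
  exact ⟨hrepos, habs, by rw [habs]; exact hre⟩

lemma exists_emb_eq_inv (L : AdmissibleLabeling K s t) (hst : s < t) {w : (𝓞 K)ˣ}
    (hw : StarCond L w) (ψ : K →+* ℂ) :
    ∃ φ : K →+* ℂ, φ (algebraMap (𝓞 K) K w) = (ψ (algebraMap (𝓞 K) K w))⁻¹ := by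
  set z : K := algebraMap (𝓞 K) K w with hzdef
  have hz : IsIntegral ℚ z := IsIntegral.of_finite ℚ z
  have hzi : IsIntegral ℚ z⁻¹ := IsIntegral.of_finite ℚ z⁻¹
  have key : ∀ (f : K →+* ℂ) (x : K), Polynomial.aeval (f x) (minpoly ℚ x) = 0 := by
    intro f x
    have h := Polynomial.aeval_algHom_apply f.toRatAlgHom x (minpoly ℚ x)
    rw [minpoly.aeval, map_zero] at h
    exact h
  set φ0 := L.σ (s + s) with hφ0
  have habs : ‖φ0 z‖ = 1 := hw.2 s le_rfl hst
  have hmc : φ0 z * (starRingEnd ℂ) (φ0 z) = 1 := by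
    rw [Complex.mul_conj, Complex.normSq_eq_norm_sq, habs]; norm_num
  have hconj : (ComplexEmbedding.conjugate φ0) z = φ0 z⁻¹ := by
    rw [ComplexEmbedding.conjugate_coe_eq, map_inv₀]
    exact (inv_eq_of_mul_eq_one_right hmc).symm
  have e1 : minpoly ℚ z = minpoly ℚ (φ0 z⁻¹) := by
    refine minpoly.eq_of_irreducible_of_monic (minpoly.irreducible hz) ?_ (minpoly.monic hz)
    rw [← hconj]; exact key (ComplexEmbedding.conjugate φ0) z
  have e2 : minpoly ℚ z⁻¹ = minpoly ℚ (φ0 z⁻¹) :=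
    minpoly.eq_of_irreducible_of_monic (minpoly.irreducible hzi) (key φ0 z⁻¹)
      (minpoly.monic hzi)
  have heq : minpoly ℚ z⁻¹ = minpoly ℚ z := e2.trans e1.symm
  have hmem : (ψ z)⁻¹ ∈ Set.range fun φ : K →+* ℂ => φ z := by
    rw [Embeddings.range_eval_eq_rootSet_minpoly K ℂ z, ← heq,
      ← Embeddings.range_eval_eq_rootSet_minpoly K ℂ z⁻¹]
    exact ⟨ψ, map_inv₀ ψ z⟩
  obtain ⟨φ, hφ⟩ := hmem
  exact ⟨φ, hφ⟩

end Helpers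

/-- Let `1 ≤ s < t`, let `K` be a number field of degree `s+2t` with an
admissible labeling of its embeddings.  If `u 0, …, u (s-1)` are units each satisfying
conditions (★), then the `s×s` real matrix `(log σ_j(u_i))` is singular.  In particular,
there is no subgroup `U ≤ 𝓞_K^×` of rank `s` (i.e. containing `s` units whose log-matrix
is nonsingular) all of whose elements satisfy conditions (★). -/
theorem log_matrix_singular_of_starCond
    (s t : ℕ) (hs : 1 ≤ s) (hst : s < t)
    (K : Type*) [Field K] [NumberField K]
    (hdeg : Module.finrank ℚ K = s + 2 * t)
    (L : AdmissibleLabeling K s t) :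
    (∀ u : Fin s → (𝓞 K)ˣ, (∀ i, StarCond L (u i)) →
      (Matrix.of fun i j : Fin s =>
        Real.log ((L.σ j (algebraMap (𝓞 K) K (u i))).re)).det = 0) ∧
    ¬ ∃ U : Subgroup (𝓞 K)ˣ, (∀ v ∈ U, StarCond L v) ∧
      ∃ v : Fin s → (𝓞 K)ˣ, (∀ i, v i ∈ U) ∧
        (Matrix.of fun i j : Fin s =>
          Real.log ((L.σ j (algebraMap (𝓞 K) K (v i))).re)).det ≠ 0 := by
  have main : ∀ u : Fin s → (𝓞 K)ˣ, (∀ i, StarCond L (u i)) →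
      (Matrix.of fun i j : Fin s =>
        Real.log ((L.σ j (algebraMap (𝓞 K) K (u i))).re)).det = 0 := by
    intro u hu
    by_contra hdet
    set M : Matrix (Fin s) (Fin s) ℝ := Matrix.of fun i j : Fin s =>
      Real.log ((L.σ j (algebraMap (𝓞 K) K (u i))).re) with hMdef
    let j0 : Fin s := ⟨0, hs⟩
    set v : Fin s → ℝ := fun j => if j = j0 then 1 else 3 with hv
    set c : Fin s → ℝ := (M.transpose)⁻¹.mulVec v with hcdef
    have hMv : M.transpose.mulVec c = v := by
      rw [hcdef, Matrix.mulVec_mulVec, Matrix.mul_nonsing_inv, Matrix.one_mulVec]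
      rw [Matrix.det_transpose]
      exact isUnit_iff_ne_zero.mpr hdet
    set B : ℝ := (∑ j, ∑ i, |M i j|) + 1 with hB
    have hB1 : 1 ≤ B := by
      have : (0:ℝ) ≤ ∑ j, ∑ i, |M i j| :=
        Finset.sum_nonneg fun j _ => Finset.sum_nonneg fun i _ => abs_nonneg _
      rw [hB]; linarith
    set N : ℕ := ⌈3 * B⌉₊ + 1 with hN
    have hNB : 3 * B < (N : ℝ) := by
      have := Nat.le_ceil (3 * B)
      rw [hN]; push_cast; linarith
    set n : Fin s → ℤ := fun i => round ((N:ℝ) * c i) with hn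
    set w : (𝓞 K)ˣ := ∏ i, u i ^ n i with hw
    have hws : StarCond L w := by
      have hmem : w ∈ starSubgroup L :=
        Subgroup.prod_mem _ fun i _ => Subgroup.zpow_mem _ (hu i) _
      exact hmem
    set z : K := algebraMap (𝓞 K) K ↑w with hz
    set x : Fin s → ℝ := fun j => Real.log (‖L.σ j z‖) with hx
    have hM_eq : ∀ (i j : Fin s),
        M i j = Real.log (‖L.σ j (algebraMap (𝓞 K) K (u i))‖) := by
      intro i j
      rw [hMdef]
      exact congrArg Real.log ((star_real L (hu i) j.isLt).2.1).symm
    have hx_eq : ∀ j : Fin s, x j = ∑ i, (n i : ℝ) * M i j := by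
      intro j
      rw [hx]
      show Real.log (‖L.σ j z‖) = _
      rw [hz, hw, log_abs_prod_zpow]
      exact Finset.sum_congr rfl fun i _ => by rw [hM_eq]
    have hxb : ∀ j : Fin s, |x j - N * v j| < B := by
      intro j
      have hvj : ∑ i, M i j * c i = v j := by
        have := congrFun hMv j
        simpa [Matrix.mulVec, dotProduct, Matrix.transpose_apply] using this
      have e : x j - N * v j = ∑ i, (((n i : ℝ) - N * c i) * M i j) := by
        rw [hx_eq j, ← hvj, Finset.mul_sum, ← Finset.sum_sub_distrib]
        exact Finset.sum_congr rfl fun i _ => by ring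
      have h1 : ∑ i, |M i j| ≤ B - 1 := by
        have hle := Finset.single_le_sum (f := fun j => ∑ i, |M i j|)
          (fun j _ => Finset.sum_nonneg fun i _ => abs_nonneg _) (Finset.mem_univ j)
        rw [hB]; linarith
      have h2 : |x j - N * v j| ≤ (1/2) * (B - 1) := by
        rw [e]
        calc |∑ i, (((n i : ℝ) - N * c i) * M i j)|
            ≤ ∑ i, |((n i : ℝ) - N * c i) * M i j| := Finset.abs_sum_le_sum_abs _ _
          _ ≤ ∑ i, (1/2) * |M i j| := by
              refine Finset.sum_le_sum fun i _ => ?_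
              rw [abs_mul]
              refine mul_le_mul_of_nonneg_right ?_ (abs_nonneg _)
              rw [hn, abs_sub_comm]
              exact abs_sub_round _
          _ = (1/2) * ∑ i, |M i j| := by rw [Finset.mul_sum]
          _ ≤ (1/2) * (B - 1) := by linarith
      linarith
    have hvj1 : ∀ j : Fin s, (1:ℝ) ≤ v j := by
      intro j; rw [hv]; dsimp only; split <;> norm_num
    have hxpos : ∀ j : Fin s, 0 < x j := by
      intro j
      have hb := abs_lt.mp (hxb j)
      have hNv : (N:ℝ) * 1 ≤ (N:ℝ) * v j :=
        mul_le_mul_of_nonneg_left (hvj1 j) (Nat.cast_nonneg N)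
      nlinarith
    have hx2 : ∀ j : Fin s, j ≠ j0 → 2 * x j0 < x j := by
      intro j hj
      have hbj := abs_lt.mp (hxb j)
      have hbj0 := abs_lt.mp (hxb j0)
      have hv0 : v j0 = 1 := by rw [hv]; simp
      have hvj : v j = 3 := by rw [hv]; simp [hj]
      rw [hv0] at hbj0
      rw [hvj] at hbj
      nlinarith
    have hApos : ∀ m : ℕ, 0 < ‖L.σ m z‖ := fun m =>
      norm_pos_iff.mpr (emb_ne_zero _ w)
    have hA0 : 1 < ‖L.σ (j0 : ℕ) z‖ :=
      (Real.log_pos_iff (hApos _).le).mp (hxpos j0)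
    obtain ⟨φ, hφ⟩ := exists_emb_eq_inv L hst hws (L.σ (j0 : ℕ))
    obtain ⟨i, hi, hσi⟩ := L.surj φ
    rw [← hσi] at hφ
    have habsφ : ‖L.σ i z‖ = (‖L.σ (j0 : ℕ) z‖)⁻¹ := by
      rw [← hz] at hφ
      rw [hφ, norm_inv]
    have hA0inv : (‖L.σ (j0 : ℕ) z‖)⁻¹ < 1 := inv_lt_one_of_one_lt₀ hA0
    rcases lt_or_ge i s with his | his
    · -- i is a real index: |σ_i z| > 1, contradiction
      have h1 : 1 < ‖L.σ i z‖ := by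
        have hp := hxpos ⟨i, his⟩
        exact (Real.log_pos_iff (hApos i).le).mp hp
      rw [habsφ] at h1
      linarith
    · -- i is a complex index
      obtain ⟨j, hjt, hjabs⟩ : ∃ j < t, ‖L.σ (s + j) z‖ = ‖L.σ i z‖ := by
        rcases lt_or_ge i (s + t) with h | h
        · exact ⟨i - s, by omega, by rw [show s + (i - s) = i by omega]⟩
        · refine ⟨i - s - t, by omega, ?_⟩
          have hc := L.conjRel (i - s - t) (by omega)
          rw [show s + t + (i - s - t) = i by omega] at hc
          rw [hc, ComplexEmbedding.conjugate_coe_eq, Complex.norm_conj]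
      rcases lt_or_ge j s with hjs | hjs
      · -- first kind of (★) condition
        have hrel := (star_real L hws hjs).2.2
        rw [← hz, hjabs, habsφ] at hrel
        have hA0ne : ‖L.σ (j0 : ℕ) z‖ ≠ 0 := ne_of_gt (hApos _)
        have hAj : ‖L.σ j z‖ = (‖L.σ (j0 : ℕ) z‖) ^ 2 := by
          field_simp at hrel
          exact hrel
        have hxj : x ⟨j, hjs⟩ = 2 * x j0 := by
          rw [hx]
          show Real.log (‖L.σ j z‖) = 2 * Real.log (‖L.σ (j0 : ℕ) z‖)
          rw [hAj, Real.log_pow]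
          push_cast; ring
        rcases eq_or_ne (⟨j, hjs⟩ : Fin s) j0 with he | hne
        · rw [he] at hxj
          have := hxpos j0
          linarith
        · have := hx2 ⟨j, hjs⟩ hne
          linarith
      · -- second kind of (★) condition
        have h1 : ‖L.σ (s + j) z‖ = 1 := hws.2 j hjs hjt
        rw [hjabs, habsφ] at h1
        have : ‖L.σ (j0 : ℕ) z‖ = 1 := by
          rw [← inv_inv (‖L.σ (j0 : ℕ) z‖), h1, inv_one]
        linarith
  refine ⟨main, ?_⟩
  rintro ⟨U, hU, v, hvU, hd⟩
  exact hd (main v fun i => hU _ (hvU i))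
end

section
/- There is no number field K of degree 8 with exactly 2 real embeddings and 6 complex (non-real) embeddings admitting an admissible labeling σ_1, …, σ_8 of its embeddings and a unit u ∈ 𝓞_K^× with ℚ(u) = K such that σ_1(u)·|σ_3(u)|² = 1, σ_2(u)·|σ_4(u)|² = 1 and |σ_5(u)| = 1. -/
open NumberField

/-- Exponent pairs occurring for the six roots `A^{±1}, B^{±1}, (AB)^{±1}`. -/
abbrev Lat0 (m k : ℤ) : Prop :=
  (m = 1 ∧ k = 0) ∨ (m = -1 ∧ k = 0) ∨ (m = 0 ∧ k = 1) ∨ (m = -1 ∧ k = -1) ∨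
  (m = 0 ∧ k = -1) ∨ (m = 1 ∧ k = 1)

/-- Exponent pairs for all eight roots. -/
abbrev LatV (m k : ℤ) : Prop := Lat0 m k ∨ (m = 1 ∧ k = 2) ∨ (m = -1 ∧ k = -2)

set_option maxHeartbeats 1000000 in
/-- There is no number field `K` of degree 8 with exactly 2 real and 6
complex (non-real) embeddings admitting an admissible labeling `σ 0, …, σ 7` and a unit
`u ∈ 𝓞_K^×` with `ℚ(u) = K` such that `σ 0 (u)·|σ 2 (u)|² = 1`, `σ 1 (u)·|σ 3 (u)|² = 1`
and `|σ 4 (u)| = 1` (0-based indices, `(s,t) = (2,3)`). -/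
theorem no_degree_eight_unit
    (K : Type*) [Field K] [NumberField K] (hdeg : Module.finrank ℚ K = 8) :
    ¬ ∃ (L : AdmissibleLabeling K 2 3) (u : (𝓞 K)ˣ),
      IntermediateField.adjoin ℚ {algebraMap (𝓞 K) K u} = ⊤ ∧
      L.σ 0 (algebraMap (𝓞 K) K u) *
        (‖L.σ 2 (algebraMap (𝓞 K) K u)‖ : ℂ) ^ 2 = 1 ∧
      L.σ 1 (algebraMap (𝓞 K) K u) *
        (‖L.σ 3 (algebraMap (𝓞 K) K u)‖ : ℂ) ^ 2 = 1 ∧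
      ‖L.σ 4 (algebraMap (𝓞 K) K u)‖ = 1 := by
  rintro ⟨Lab, u, hgen, hs1, hs2, hs3⟩
  set x : K := algebraMap (𝓞 K) K u with hxdef
  have hint : IsIntegral ℚ x := (Algebra.IsAlgebraic.isAlgebraic (R := ℚ) x).isIntegral
  -- embeddings are determined by their value at the generator x
  have hext : ∀ σ τ : K →+* ℂ, σ x = τ x → σ = τ := by
    intro σ τ h
    have hadj : Algebra.adjoin ℚ ({x} : Set K) = ⊤ := by
      have h1 := congrArg IntermediateField.toSubalgebra hgen
      rwa [IntermediateField.adjoin_toSubalgebra_of_isAlgebraic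
        (fun y hy => by rcases hy with rfl; exact hint.isAlgebraic),
        IntermediateField.top_toSubalgebra] at h1
    have h2 : σ.toRatAlgHom = τ.toRatAlgHom := by
      have hle : Algebra.adjoin ℚ ({x} : Set K) ≤ AlgHom.equalizer σ.toRatAlgHom τ.toRatAlgHom :=
        Algebra.adjoin_le (by rintro y rfl; exact h)
      rw [hadj] at hle
      exact AlgHom.ext fun y => hle (Algebra.mem_top (R := ℚ))
    have := congrArg AlgHom.toRingHom h2
    simpa using this
  set p : Polynomial ℚ := minpoly ℚ x with hpdef
  have hmon : p.Monic := minpoly.monic hint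
  have hp0 : p ≠ 0 := hmon.ne_zero
  have hirr : Irreducible p := minpoly.irreducible hint
  have hdeg8 : p.natDegree = 8 := by
    have h1 := IntermediateField.adjoin.finrank hint
    rw [hgen] at h1
    rw [IntermediateField.finrank_top'] at h1
    rw [hdeg] at h1
    exact h1.symm
  have hx1 : x ≠ 1 := by
    intro h
    have : p.natDegree = 1 := by
      rw [hpdef, h, minpoly.one]
      compute_degree!
    omega
  -- the eight root values
  set r : ℕ → ℂ := fun i => Lab.σ i x with hrdef
  have hri : ∀ i, Lab.σ i x = r i := fun i => by rw [hrdef]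
  rw [hri 0, hri 2] at hs1
  rw [hri 1, hri 3] at hs2
  rw [hri 4] at hs3
  have hroot : ∀ i, Polynomial.aeval (r i) p = 0 := by
    intro i
    have h1 : r i = (Lab.σ i).toRatAlgHom x := rfl
    rw [h1, Polynomial.aeval_algHom_apply, hpdef, minpoly.aeval, map_zero]
  have hmem : ∀ i, r i ∈ p.rootSet ℂ := fun i =>
    (Polynomial.mem_rootSet).2 ⟨hp0, hroot i⟩
  have hrinj : ∀ i, i < 8 → ∀ j, j < 8 → r i = r j → i = j := by
    intro i hi j hj h
    exact Lab.inj i (by omega) j (by omega) (hext _ _ h)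
  -- conjugation facts
  have hconjA : (starRingEnd ℂ) (r 0) = r 0 := by
    have h := ComplexEmbedding.isReal_iff.1 (Lab.isReal 0 (by omega))
    have := congrArg (fun ψ : K →+* ℂ => ψ x) h
    simpa [ComplexEmbedding.conjugate_coe_eq, hri] using this
  have hnr : ∀ i, 2 ≤ i → i < 8 → (starRingEnd ℂ) (r i) ≠ r i := by
    intro i h2 h8 h
    apply Lab.notReal i h2 (by omega)
    rw [ComplexEmbedding.isReal_iff]
    apply hext
    rw [ComplexEmbedding.conjugate_coe_eq]
    exact h
  have hc5 : r 5 = (starRingEnd ℂ) (r 2) := by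
    have h := Lab.conjRel 0 (by omega)
    norm_num at h
    have := congrArg (fun ψ : K →+* ℂ => ψ x) h
    simpa [ComplexEmbedding.conjugate_coe_eq, hri] using this
  have hc6 : r 6 = (starRingEnd ℂ) (r 3) := by
    have h := Lab.conjRel 1 (by omega)
    norm_num at h
    have := congrArg (fun ψ : K →+* ℂ => ψ x) h
    simpa [ComplexEmbedding.conjugate_coe_eq, hri] using this
  have hc7 : r 7 = (starRingEnd ℂ) (r 4) := by
    have h := Lab.conjRel 2 (by omega)
    norm_num at h
    have := congrArg (fun ψ : K →+* ℂ => ψ x) h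
    simpa [ComplexEmbedding.conjugate_coe_eq, hri] using this
  -- the star conditions as multiplicative relations
  have hE1 : r 0 * (r 2 * (starRingEnd ℂ) (r 2)) = 1 := by
    rw [Complex.mul_conj]
    rw [← Complex.sq_norm]
    push_cast
    exact_mod_cast hs1
  have hE2 : r 1 * (r 3 * (starRingEnd ℂ) (r 3)) = 1 := by
    rw [Complex.mul_conj, ← Complex.sq_norm]
    push_cast
    exact_mod_cast hs2
  have hE3 : r 4 * (starRingEnd ℂ) (r 4) = 1 := by
    rw [Complex.mul_conj, ← Complex.sq_norm, hs3]
    norm_num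
  -- nonvanishing
  have hA0 : r 0 ≠ 0 := by intro h; rw [h] at hE1; simp at hE1
  have hB0 : r 2 ≠ 0 := by intro h; rw [h] at hE1; simp at hE1
  have hD0 : r 4 ≠ 0 := by intro h; rw [h] at hE3; simp at hE3
  set t : ℝ := ‖r 2‖ with htdef
  have ht0 : 0 < t := by
    rw [htdef]; exact norm_pos_iff.2 hB0
  have htne : t ≠ 0 := ne_of_gt ht0
  have hA : r 0 = ((t : ℂ) ^ 2)⁻¹ := eq_inv_of_mul_eq_one_left hs1
  have ht1 : t ≠ 1 := by
    intro h
    apply hx1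
    apply RingHom.injective (Lab.σ 0)
    rw [hri 0, map_one]
    rw [hA, h]
    norm_num
  -- splitting field machinery
  haveI : Fact ((p.map (algebraMap ℚ ℂ)).Splits) := ⟨IsAlgClosed.splits _⟩
  haveI : Polynomial.IsSplittingField ℚ p.SplittingField p :=
    Polynomial.IsSplittingField.splittingField p
  haveI hnormal : Normal ℚ p.SplittingField := Normal.of_isSplittingField p
  set φ : p.SplittingField →ₐ[ℚ] ℂ :=
    Polynomial.IsSplittingField.lift p.SplittingField p (IsAlgClosed.splits _) with hphidef
  have hφinj : Function.Injective φ := φ.toRingHom.injective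
  have himg : φ '' p.rootSet p.SplittingField = p.rootSet ℂ :=
    (Polynomial.SplittingField.splits p).image_rootSet φ
  have hzex : ∀ i : ℕ, ∃ w : p.SplittingField, w ∈ p.rootSet p.SplittingField ∧ φ w = r i := by
    intro i
    have h1 : r i ∈ φ '' p.rootSet p.SplittingField := by rw [himg]; exact hmem i
    rcases h1 with ⟨w, hw1, hw2⟩
    exact ⟨w, hw1, hw2⟩
  choose z hz1 hz2 using hzex
  have hsep : p.Separable := hirr.separable
  have hcard : Fintype.card (p.rootSet ℂ) = 8 := by
    rw [Polynomial.card_rootSet_eq_natDegree hsep (IsAlgClosed.splits _), hdeg8]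
  have hclass : ∀ c ∈ p.rootSet ℂ, ∃ i, i < 8 ∧ r i = c := by
    intro c hc
    have hfinj : Function.Injective (fun i : Fin 8 => (⟨r i, hmem i⟩ : p.rootSet ℂ)) := by
      intro a b h
      exact Fin.ext (hrinj a a.2 b b.2 (congrArg Subtype.val h))
    have hfbij : Function.Bijective (fun i : Fin 8 => (⟨r i, hmem i⟩ : p.rootSet ℂ)) :=
      (Fintype.bijective_iff_injective_and_card _).2 ⟨hfinj, by simp [hcard]⟩
    rcases hfbij.2 ⟨c, hc⟩ with ⟨i, hi⟩
    exact ⟨i, i.2, congrArg Subtype.val hi⟩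
  have hwclass : ∀ w ∈ p.rootSet p.SplittingField, ∃ i, i < 8 ∧ φ w = r i := by
    intro w hw
    have h1 : φ w ∈ p.rootSet ℂ := by rw [← himg]; exact Set.mem_image_of_mem φ hw
    rcases hclass _ h1 with ⟨i, h8, hi⟩
    exact ⟨i, h8, hi.symm⟩
  have hgroot : ∀ (g : p.SplittingField ≃ₐ[ℚ] p.SplittingField),
      ∀ w ∈ p.rootSet p.SplittingField, g w ∈ p.rootSet p.SplittingField := by
    intro g w hw
    rw [Polynomial.mem_rootSet] at hw ⊢
    refine ⟨hw.1, ?_⟩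
    have : Polynomial.aeval ((g : p.SplittingField →ₐ[ℚ] p.SplittingField) w) p =
        (g : p.SplittingField →ₐ[ℚ] p.SplittingField) (Polynomial.aeval w p) :=
      Polynomial.aeval_algHom_apply _ w p
    simpa [hw.2] using this
  have htrans : ∀ w ∈ p.rootSet p.SplittingField, ∀ w' ∈ p.rootSet p.SplittingField,
      ∃ g : p.SplittingField ≃ₐ[ℚ] p.SplittingField, g w = w' := by
    intro w hw w' hw'
    have h1 : minpoly ℚ w = p :=
      (minpoly.eq_of_irreducible_of_monic (p := p) (x := w) hirr
        ((Polynomial.mem_rootSet.1 hw).2) hmon).symm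
    have h2 : minpoly ℚ w' = p :=
      (minpoly.eq_of_irreducible_of_monic (p := p) (x := w') hirr
        ((Polynomial.mem_rootSet.1 hw').2) hmon).symm
    have h3 : IsConjRoot ℚ w' w := by
      rw [isConjRoot_def, h1, h2]
    exact h3.exists_algEquiv
  have ezL1 : z 0 * (z 2 * z 5) = 1 := by
    apply hφinj
    rw [map_mul, map_mul, map_one, hz2 0, hz2 2, hz2 5, hc5]
    exact hE1
  have ezL3 : z 4 * z 7 = 1 := by
    apply hφinj
    rw [map_mul, map_one, hz2 4, hz2 7, hc7]
    exact hE3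
  have hz4ne : z 4 ≠ 0 := by
    intro h
    apply hD0
    rw [← hz2 4, h, map_zero]
  have hinvr : ∀ i, i < 8 → ∃ j, j < 8 ∧ r j = (r i)⁻¹ := by
    intro i hi
    obtain ⟨g, hg⟩ := htrans _ (hz1 4) _ (hz1 i)
    obtain ⟨j, hj8, hjv⟩ := hwclass _ (hgroot g _ (hz1 7))
    refine ⟨j, hj8, ?_⟩
    have h1 : z i * g (z 7) = 1 := by rw [← hg, ← map_mul, ezL3, map_one]
    have h2 : r i * φ (g (z 7)) = 1 := by
      rw [← hz2 i, ← map_mul, h1, map_one]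
    rw [← hjv]
    exact eq_inv_of_mul_eq_one_right h2
  -- identification of r 1
  have hr0inv : (r 0)⁻¹ = ((t : ℂ)) ^ 2 := by rw [hA, inv_inv]
  have hr1 : r 1 = ((t : ℂ)) ^ 2 := by
    obtain ⟨j, hj8, hjv⟩ := hinvr 0 (by omega)
    have hconj : (starRingEnd ℂ) (r j) = r j := by
      rw [hjv, map_inv₀, hconjA]
    interval_cases j
    · exfalso
      have h2 : ((t : ℂ) ^ 2)⁻¹ = (t : ℂ) ^ 2 := by rw [← hA, hjv, hr0inv]
      have h3 : ((t ^ 2 : ℝ))⁻¹ = t ^ 2 := by exact_mod_cast h2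
      have h4 : t ^ 2 * t ^ 2 = 1 := by
        have h3' := h3
        field_simp at h3'
        linarith
      have h5 : (t ^ 2 - 1) * (t ^ 2 + 1) = 0 := by linear_combination h4
      have h6 : t ^ 2 = 1 := by
        rcases mul_eq_zero.1 h5 with h' | h'
        · linarith
        · nlinarith
      have h7 : (t - 1) * (t + 1) = 0 := by linear_combination h6
      rcases mul_eq_zero.1 h7 with h' | h'
      · exact ht1 (by linarith)
      · linarith
    · rw [hjv, hr0inv]
    · exact absurd hconj (hnr _ (by omega) (by omega))
    · exact absurd hconj (hnr _ (by omega) (by omega))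
    · exact absurd hconj (hnr _ (by omega) (by omega))
    · exact absurd hconj (hnr _ (by omega) (by omega))
    · exact absurd hconj (hnr _ (by omega) (by omega))
    · exact absurd hconj (hnr _ (by omega) (by omega))
  -- logarithms of the moduli
  set lt : ℝ := Real.log t with hltdef
  have hlt0 : lt ≠ 0 := by
    rw [hltdef]
    intro h
    rcases Real.log_eq_zero.1 h with h' | h' | h'
    · exact htne h'
    · exact ht1 h'
    · linarith
  have lgA : Real.log (‖r 0‖) = -2 * lt := by
    rw [hA, norm_inv, Real.log_inv, norm_pow, Complex.norm_real, Real.norm_eq_abs, abs_of_pos ht0, Real.log_pow]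
    push_cast; ring
  have lgB : Real.log (‖r 2‖) = lt := by rw [← htdef, hltdef]
  have habs1 : ‖r 1‖ = t ^ 2 := by
    rw [hr1, norm_pow, Complex.norm_real, Real.norm_eq_abs, abs_of_pos ht0]
  have lg1 : Real.log (‖r 1‖) = 2 * lt := by
    rw [habs1, Real.log_pow]; push_cast; ring
  have habs3 : ‖r 3‖ = t⁻¹ := by
    have h := hs2
    rw [hr1] at h
    have h2 : (t ^ 2 * (‖r 3‖) ^ 2 : ℝ) = 1 := by exact_mod_cast h
    have h3 : (‖r 3‖) ^ 2 = (t⁻¹) ^ 2 := by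
      field_simp
      linear_combination h2
    have h4 := congrArg Real.sqrt h3
    rwa [Real.sqrt_sq (norm_nonneg _), Real.sqrt_sq (by positivity)] at h4
  have lg3 : Real.log (‖r 3‖) = -lt := by
    rw [habs3, Real.log_inv, hltdef]
  have lg5 : Real.log (‖r 5‖) = lt := by rw [hc5, Complex.norm_conj]
  have lg6 : Real.log (‖r 6‖) = -lt := by rw [hc6, Complex.norm_conj]; exact lg3
  have lg4 : Real.log (‖r 4‖) = 0 := by rw [hs3, Real.log_one]
  have lg7 : Real.log (‖r 7‖) = 0 := by rw [hc7, Complex.norm_conj, hs3, Real.log_one]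
  -- conj (r 2) in lattice form
  have hr5conj : (starRingEnd ℂ) (r 2) = (r 0 * r 2)⁻¹ := by
    have h : (r 0 * r 2) * (starRingEnd ℂ) (r 2) = 1 := by rw [mul_assoc]; exact hE1
    exact eq_inv_of_mul_eq_one_right h
  -- the pair {r 3, r 6}
  have hC36 : (r 3 = (r 2)⁻¹ ∧ r 6 = r 0 * r 2) ∨ (r 3 = r 0 * r 2 ∧ r 6 = (r 2)⁻¹) := by
    obtain ⟨j, hj8, hjv⟩ := hinvr 2 (by omega)
    have hlog : Real.log (‖r j‖) = -lt := by
      rw [hjv, norm_inv, Real.log_inv, lgB]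
    interval_cases j
    · exfalso; rw [lgA] at hlog; apply hlt0; linarith
    · exfalso; rw [lg1] at hlog; apply hlt0; linarith
    · exfalso; rw [lgB] at hlog; apply hlt0; linarith
    · left
      refine ⟨hjv, ?_⟩
      rw [hc6, hjv, map_inv₀, hr5conj, inv_inv]
    · exfalso; rw [lg4] at hlog; apply hlt0; linarith
    · exfalso; rw [lg5] at hlog; apply hlt0; linarith
    · right
      have h36 : r 3 = (starRingEnd ℂ) (r 6) := by rw [hc6, Complex.conj_conj]
      refine ⟨?_, hjv⟩
      rw [h36, hjv, map_inv₀, hr5conj, inv_inv]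
    · exfalso; rw [lg7] at hlog; apply hlt0; linarith
  -- lattice machinery
  have hr7inv : r 7 = (r 4)⁻¹ := by
    rw [hc7]; exact eq_inv_of_mul_eq_one_right hE3
  have habs0pos : 0 < ‖r 0‖ := norm_pos_iff.2 hA0
  have habs2pos : 0 < ‖r 2‖ := norm_pos_iff.2 hB0
  have hlogpow : ∀ m k : ℤ, Real.log (‖(r 0) ^ m * (r 2) ^ k‖)
      = (-2 * (m : ℝ) + (k : ℝ)) * lt := by
    intro m k
    rw [norm_mul, norm_zpow, norm_zpow,
      Real.log_mul (ne_of_gt (zpow_pos habs0pos m)) (ne_of_gt (zpow_pos habs2pos k)),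
      Real.log_zpow, Real.log_zpow, lgA, lgB]
    ring
  have hklift : ∀ m k : ℤ, (r 0) ^ m * (r 2) ^ k = 1 → k = 2 * m := by
    intro m k h
    have h1 : Real.log (‖(r 0) ^ m * (r 2) ^ k‖) = 0 := by rw [h]; simp
    rw [hlogpow] at h1
    rcases mul_eq_zero.1 h1 with h' | h'
    · have h2 : ((k : ℝ)) = 2 * (m : ℝ) := by linarith
      exact_mod_cast h2
    · exact absurd h' hlt0
  have hlogeq : ∀ m k : ℤ, (r 0) ^ m * (r 2) ^ k = (r 4)⁻¹ → k = 2 * m := by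
    intro m k h
    have h1 : Real.log (‖(r 0) ^ m * (r 2) ^ k‖) = 0 := by
      rw [h, norm_inv, hs3]; simp
    rw [hlogpow] at h1
    rcases mul_eq_zero.1 h1 with h' | h'
    · have h2 : ((k : ℝ)) = 2 * (m : ℝ) := by linarith
      exact_mod_cast h2
    · exact absurd h' hlt0
  have hlat0 : ∀ w ∈ p.rootSet p.SplittingField,
      (∃ m k : ℤ, Lat0 m k ∧ φ w = (r 0) ^ m * (r 2) ^ k) ∨ φ w = r 4 ∨ φ w = (r 4)⁻¹ := by
    intro w hw
    obtain ⟨i, hi8, hiv⟩ := hwclass w hw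
    interval_cases i
    · exact Or.inl ⟨1, 0, Or.inl ⟨rfl, rfl⟩, by rw [hiv]; simp⟩
    · exact Or.inl ⟨-1, 0, by decide, by rw [hiv, hr1, ← hr0inv]; simp⟩
    · exact Or.inl ⟨0, 1, by decide, by rw [hiv]; simp⟩
    · rcases hC36 with ⟨h3, _⟩ | ⟨h3, _⟩
      · exact Or.inl ⟨0, -1, by decide, by rw [hiv, h3]; simp⟩
      · exact Or.inl ⟨1, 1, by decide, by rw [hiv, h3]; simp⟩
    · exact Or.inr (Or.inl hiv)
    · exact Or.inl ⟨-1, -1, by decide,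
        by rw [hiv, hc5, hr5conj]; simp [mul_inv, zpow_neg, zpow_one]; ring⟩
    · rcases hC36 with ⟨_, h6⟩ | ⟨_, h6⟩
      · exact Or.inl ⟨1, 1, by decide, by rw [hiv, h6]; simp⟩
      · exact Or.inl ⟨0, -1, by decide, by rw [hiv, h6]; simp⟩
    · exact Or.inr (Or.inr (by rw [hiv, hr7inv]))
  have hnr4 : (starRingEnd ℂ) (r 4) ≠ r 4 := hnr 4 (by omega) (by omega)
  have hr4ne1 : r 4 ≠ 1 := by intro h; apply hnr4; rw [h]; simp
  have hone_not_lat : ∀ m k : ℤ, Lat0 m k → (r 0) ^ m * (r 2) ^ k ≠ 1 := by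
    intro m k hmk h
    have := hklift m k h
    unfold Lat0 at hmk
    omega
  -- first Galois move : the unitary root is A·B²(±1)
  obtain ⟨g1, hg1⟩ := htrans _ (hz1 0) _ (hz1 4)
  have hPmem := hgroot g1 _ (hz1 2)
  have hQmem := hgroot g1 _ (hz1 5)
  have hPQ : φ (g1 (z 2)) * φ (g1 (z 5)) = (r 4)⁻¹ := by
    have h1 : z 4 * (g1 (z 2) * g1 (z 5)) = 1 := by
      rw [← hg1, ← map_mul, ← map_mul, ezL1, map_one]
    have h2 : g1 (z 2) * g1 (z 5) = (z 4)⁻¹ := eq_inv_of_mul_eq_one_right h1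
    rw [← map_mul, h2, map_inv₀, hz2 4]
  have hPnD : φ (g1 (z 2)) ≠ r 4 := by
    intro h
    have h1 : g1 (z 2) = z 4 := hφinj (by rw [h, hz2 4])
    rw [← hg1] at h1
    have h2 : z 2 = z 0 := g1.injective h1
    have h3 : r 2 = r 0 := by rw [← hz2 2, ← hz2 0, h2]
    have := hrinj 2 (by omega) 0 (by omega) h3
    omega
  have hQnD : φ (g1 (z 5)) ≠ r 4 := by
    intro h
    have h1 : g1 (z 5) = z 4 := hφinj (by rw [h, hz2 4])
    rw [← hg1] at h1
    have h2 : z 5 = z 0 := g1.injective h1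
    have h3 : r 5 = r 0 := by rw [← hz2 5, ← hz2 0, h2]
    have := hrinj 5 (by omega) 0 (by omega) h3
    omega
  have hr4inv1 : (r 4)⁻¹ ≠ 1 := by
    intro h
    exact hr4ne1 (by rw [← inv_inv (r 4), h, inv_one])
  have hBpow : (r 2) ^ (2 : ℤ) = r 2 ^ 2 := by exact_mod_cast zpow_natCast (r 2) 2
  have hD : r 4 = r 0 * r 2 ^ 2 ∨ r 4 = (r 0 * r 2 ^ 2)⁻¹ := by
    rcases hlat0 _ hPmem with ⟨m, k, hmk, hPv⟩ | hPv | hPv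
    · rcases hlat0 _ hQmem with ⟨m', k', hmk', hQv⟩ | hQv | hQv
      · have heq : (r 0) ^ (m + m') * (r 2) ^ (k + k') = (r 4)⁻¹ := by
          rw [zpow_add₀ hA0, zpow_add₀ hB0, ← hPQ, hPv, hQv]; ring
        have hsum : k + k' = 2 * (m + m') := hlogeq _ _ heq
        have hcases : (m + m' = 0 ∧ k + k' = 0) ∨ (m + m' = 1 ∧ k + k' = 2) ∨
            (m + m' = -1 ∧ k + k' = -2) := by
          unfold Lat0 at hmk hmk'
          omega
        rcases hcases with ⟨h1, h2⟩ | ⟨h1, h2⟩ | ⟨h1, h2⟩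
        · exfalso
          rw [h1, h2] at heq
          simp only [zpow_zero, one_mul] at heq
          exact hr4inv1 heq.symm
        · right
          rw [h1, h2] at heq
          simp only [zpow_one, hBpow] at heq
          rw [heq, inv_inv]
        · left
          rw [h1, h2] at heq
          simp only [zpow_neg, zpow_one, hBpow] at heq
          have h5 : (r 0 * r 2 ^ 2)⁻¹ = (r 4)⁻¹ := by rw [mul_inv]; exact heq
          exact (inv_injective h5).symm
      · exact absurd hQv hQnD
      · exfalso
        have h4 : (r 4)⁻¹ ≠ 0 := inv_ne_zero hD0
        rw [hQv] at hPQ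
        have hP1 : φ (g1 (z 2)) = 1 := by
          apply mul_right_cancel₀ h4
          rw [one_mul]; exact hPQ
        exact hone_not_lat m k hmk (by rw [← hPv, hP1])
    · exact absurd hPv hPnD
    · exfalso
      have h4 : (r 4)⁻¹ ≠ 0 := inv_ne_zero hD0
      rw [hPv] at hPQ
      have hQ1 : φ (g1 (z 5)) = 1 := by
        apply mul_left_cancel₀ h4
        rw [mul_one]
        exact hPQ
      rcases hlat0 _ hQmem with ⟨m, k, hmk, hQv⟩ | hQv | hQv
      · exact hone_not_lat m k hmk (by rw [← hQv, hQ1])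
      · exact hr4ne1 (by rw [← hQv, hQ1])
      · exact hr4inv1 (by rw [← hQv, hQ1])
  -- r 4 is not a root of unity
  have hrou : ∀ m : ℤ, (r 4) ^ m = 1 → m = 0 := by
    intro m h
    by_contra hm
    have hnpos : m.natAbs ≠ 0 := Int.natAbs_ne_zero.2 hm
    have hn : (r 4) ^ (m.natAbs : ℕ) = 1 := by
      rcases Int.natAbs_eq m with he | he
      · rw [he] at h; rwa [zpow_natCast] at h
      · rw [he] at h; rw [zpow_neg, zpow_natCast, inv_eq_one] at h; exact h
    have hmin4 : minpoly ℚ (r 4) = p :=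
      (minpoly.eq_of_irreducible_of_monic (p := p) (x := r 4) hirr (hroot 4) hmon).symm
    have hdvd : p ∣ (Polynomial.X ^ m.natAbs - 1 : Polynomial ℚ) := by
      rw [← hmin4]
      apply minpoly.dvd
      simp [hn]
    have hr0n : (r 0) ^ m.natAbs = 1 := by
      rcases hdvd with ⟨q, hq⟩
      have h2 : Polynomial.aeval (r 0) ((Polynomial.X ^ m.natAbs - 1 : Polynomial ℚ)) = 0 := by
        rw [hq, map_mul, hroot 0, zero_mul]
      simpa [sub_eq_zero] using h2
    have h3 : ((t ^ 2)⁻¹ : ℝ) ^ m.natAbs = 1 := by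
      rw [hA] at hr0n
      exact_mod_cast hr0n
    have h4 := congrArg Real.log h3
    rw [Real.log_pow, Real.log_inv, Real.log_pow, Real.log_one] at h4
    have h5 : (m.natAbs : ℝ) * (2 * lt) = 0 := by rw [hltdef]; push_cast at h4 ⊢; linarith
    rcases mul_eq_zero.1 h5 with h' | h'
    · exact hnpos (by exact_mod_cast h')
    · exact hlt0 (by linarith)
  -- multiplicative independence ⇒ unique exponents
  have hcancel : ∀ m k m' k' : ℤ, (r 0) ^ m * (r 2) ^ k = (r 0) ^ m' * (r 2) ^ k' →
      m = m' ∧ k = k' := by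
    intro m k m' k' h
    have h1 : (r 0) ^ (m - m') * (r 2) ^ (k - k') = 1 := by
      rw [zpow_sub₀ hA0, zpow_sub₀ hB0, div_mul_div_comm, h,
        div_self (mul_ne_zero (zpow_ne_zero _ hA0) (zpow_ne_zero _ hB0))]
    have hk : k - k' = 2 * (m - m') := hklift _ _ h1
    have h2 : ((r 0) * (r 2) ^ 2) ^ (m - m') = 1 := by
      have e : ((r 0) * (r 2) ^ 2) ^ (m - m') = (r 0) ^ (m - m') * (r 2) ^ (2 * (m - m')) := by
        rw [mul_zpow, ← hBpow, ← zpow_mul]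
      rw [e, ← hk]
      exact h1
    have hm0 : m - m' = 0 := by
      rcases hD with hE | hE
      · rw [← hE] at h2
        exact hrou _ h2
      · have hE' : (r 0 * r 2 ^ 2) = (r 4)⁻¹ := by rw [hE, inv_inv]
        rw [hE', inv_zpow, inv_eq_one] at h2
        exact hrou _ h2
    exact ⟨by omega, by omega⟩
  -- the products A·B and A·B² are roots
  have hABroot : z 0 * z 2 ∈ p.rootSet p.SplittingField := by
    rcases hC36 with ⟨h3, h6⟩ | ⟨h3, h6⟩
    · have h : z 0 * z 2 = z 6 := hφinj (by rw [map_mul, hz2 0, hz2 2, hz2 6, h6])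
      rw [h]; exact hz1 6
    · have h : z 0 * z 2 = z 3 := hφinj (by rw [map_mul, hz2 0, hz2 2, hz2 3, h3])
      rw [h]; exact hz1 3
  have hAB2root : z 0 * z 2 * z 2 ∈ p.rootSet p.SplittingField := by
    rcases hD with hE | hE
    · have h : z 0 * z 2 * z 2 = z 4 := hφinj
        (by rw [map_mul, map_mul, hz2 0, hz2 2, hz2 4, hE]; ring)
      rw [h]; exact hz1 4
    · have h : z 0 * z 2 * z 2 = z 7 := hφinj
        (by rw [map_mul, map_mul, hz2 0, hz2 2, hz2 7, hr7inv, hE, inv_inv]; ring)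
      rw [h]; exact hz1 7
  -- the final Galois move
  obtain ⟨g2, hg2⟩ := htrans _ (hz1 2) _ (hz1 1)
  have hg2z2 : φ (g2 (z 2)) = (r 0)⁻¹ := by
    rw [hg2, hz2 1, hr1, ← hr0inv]
  have hlat : ∀ w ∈ p.rootSet p.SplittingField,
      ∃ m k : ℤ, LatV m k ∧ φ w = (r 0) ^ m * (r 2) ^ k := by
    intro w hw
    rcases hlat0 w hw with ⟨m, k, hmk, hv⟩ | hv | hv
    · exact ⟨m, k, Or.inl hmk, hv⟩
    · rcases hD with hE | hE
      · exact ⟨1, 2, by decide, by rw [hv, hE, zpow_one, hBpow]⟩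
      · exact ⟨-1, -2, by decide,
          by rw [hv, hE]; simp only [zpow_neg, zpow_one, hBpow, mul_inv]⟩
    · rcases hD with hE | hE
      · exact ⟨-1, -2, by decide,
          by rw [hv, hE]; simp only [zpow_neg, zpow_one, hBpow, mul_inv]⟩
      · exact ⟨1, 2, by decide, by rw [hv, hE, inv_inv, zpow_one, hBpow]⟩
  obtain ⟨a, b, hab, hWv⟩ := hlat _ (hgroot g2 _ (hz1 0))
  obtain ⟨a1, b1, hab1, hW1⟩ := hlat _ (hgroot g2 _ hABroot)
  obtain ⟨a2, b2, hab2, hW2⟩ := hlat _ (hgroot g2 _ hAB2root)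
  have hE1' : (r 0) ^ (a - 1) * (r 2) ^ b = (r 0) ^ a1 * (r 2) ^ b1 := by
    have hsplit : φ (g2 (z 0 * z 2)) = φ (g2 (z 0)) * φ (g2 (z 2)) := by
      rw [map_mul, map_mul]
    rw [← hW1, hsplit, hWv, hg2z2, zpow_sub_one₀ hA0]
    ring
  obtain ⟨ha1, hb1⟩ := hcancel _ _ _ _ hE1'
  have hE2' : (r 0) ^ (a - 2) * (r 2) ^ b = (r 0) ^ a2 * (r 2) ^ b2 := by
    have hsplit : φ (g2 (z 0 * z 2 * z 2)) = φ (g2 (z 0)) * φ (g2 (z 2)) * φ (g2 (z 2)) := by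
      rw [map_mul, map_mul, map_mul, map_mul]
    rw [← hW2, hsplit, hWv, hg2z2,
      show (a - 2 : ℤ) = a - 1 - 1 by ring, zpow_sub_one₀ hA0, zpow_sub_one₀ hA0]
    ring
  obtain ⟨ha2, hb2⟩ := hcancel _ _ _ _ hE2'
  unfold LatV Lat0 at hab hab1 hab2
  omega
end

section
/- There is no number field K of degree 10 with exactly 2 real embeddings and 8 complex (non-real) embeddings admitting an admissible labeling σ_1, …, σ_10 of its embeddings and a unit u ∈ 𝓞_K^× with ℚ(u) = K such that σ_1(u)·|σ_3(u)|² = 1, σ_2(u)·|σ_4(u)|² = 1, |σ_5(u)| = 1 and |σ_6(u)| = 1. -/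
open NumberField

open Polynomial IntermediateField

private def mmA : Fin 10 → Fin 10 := ![1,0,3,2,8,9,7,6,4,5]
private def mmB : Fin 10 → Fin 10 := ![1,0,7,6,8,9,3,2,4,5]
private def eE : Fin 10 → ℤ := ![-2,2,1,-1,0,0,1,-1,0,0]

private theorem keyA : ∀ i j k l : Fin 10,
    ([i, mmA i, j, mmA j, k, mmA k, l, mmA l] : List (Fin 10)).Nodup →
    eE l = 1 → eE i + eE j + eE k ≠ 0 := by decide

private theorem keyB : ∀ i j k l : Fin 10,
    ([i, mmB i, j, mmB j, k, mmB k, l, mmB l] : List (Fin 10)).Nodup →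
    eE l = 1 → eE i + eE j + eE k ≠ 0 := by decide

/-- There is no number field `K` of degree 10 with exactly 2 real and 8
complex (non-real) embeddings admitting an admissible labeling `σ 0, …, σ 9` and a unit
`u ∈ 𝓞_K^×` with `ℚ(u) = K` such that `σ 0 (u)·|σ 2 (u)|² = 1`, `σ 1 (u)·|σ 3 (u)|² = 1`,
`|σ 4 (u)| = 1` and `|σ 5 (u)| = 1` (0-based indices, `(s,t) = (2,4)`). -/
theorem no_degree_ten_unit
    (K : Type*) [Field K] [NumberField K] (hdeg : Module.finrank ℚ K = 10) :
    ¬ ∃ (L : AdmissibleLabeling K 2 4) (u : (𝓞 K)ˣ),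
      IntermediateField.adjoin ℚ {algebraMap (𝓞 K) K u} = ⊤ ∧
      L.σ 0 (algebraMap (𝓞 K) K u) *
        (‖L.σ 2 (algebraMap (𝓞 K) K u)‖ : ℂ) ^ 2 = 1 ∧
      L.σ 1 (algebraMap (𝓞 K) K u) *
        (‖L.σ 3 (algebraMap (𝓞 K) K u)‖ : ℂ) ^ 2 = 1 ∧
      ‖L.σ 4 (algebraMap (𝓞 K) K u)‖ = 1 ∧
      ‖L.σ 5 (algebraMap (𝓞 K) K u)‖ = 1 := by
  rintro ⟨L, u, hgen, h1, h2, h3, h4⟩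
  set α : K := algebraMap (𝓞 K) K u with hα
  -- embeddings are determined by value at α
  have emb_ext : ∀ f g : K →+* ℂ, f α = g α → f = g := by
    intro f g hfg
    let E0 : IntermediateField ℚ K :=
      Subalgebra.toIntermediateField (AlgHom.equalizer f.toRatAlgHom g.toRatAlgHom)
        (fun y hy => by
          have h : f y = g y := hy
          show f (y⁻¹) = g (y⁻¹)
          rw [map_inv₀, map_inv₀, h])
    have hle : IntermediateField.adjoin ℚ {α} ≤ E0 := by
      apply IntermediateField.adjoin_le_iff.mpr
      intro z hz
      rcases hz with rfl
      exact hfg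
    rw [hgen] at hle
    ext z
    exact hle (IntermediateField.mem_top (x := z))
  -- basic integrality facts
  have hαint : IsIntegral ℚ α := IsIntegral.of_finite ℚ α
  set P : Polynomial ℚ := minpoly ℚ α with hPdef
  have hPirr : Irreducible P := minpoly.irreducible hαint
  have hPmonic : P.Monic := minpoly.monic hαint
  have hPne : P ≠ 0 := minpoly.ne_zero hαint
  set x : Fin 10 → ℂ := fun i => L.σ (i : ℕ) α with hxdef
  have hσ_inj : ∀ i j : Fin 10, x i = x j → i = j := by
    intro i j hij
    have h := emb_ext (L.σ i) (L.σ j) hij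
    have hi : (i : ℕ) < 2 + 2 * 4 := by have := i.isLt; omega
    have hj : (j : ℕ) < 2 + 2 * 4 := by have := j.isLt; omega
    exact Fin.ext (L.inj i hi j hj h)
  have hroot : ∀ i : Fin 10, aeval (x i) P = 0 := by
    intro i
    have h2 : aeval ((L.σ (i:ℕ)).toRatAlgHom α) P = 0 := by
      rw [aeval_algHom_apply, hPdef, minpoly.aeval, map_zero]
    exact h2
  have hroot_idx : ∀ z : ℂ, aeval z P = 0 → ∃ i : Fin 10, x i = z := by
    intro z hz
    have hzmem : z ∈ P.aroots ℂ := by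
      rw [mem_aroots]; exact ⟨hPne, hz⟩
    let f0 : ℚ⟮α⟯ →ₐ[ℚ] ℂ := (IntermediateField.algHomAdjoinIntegralEquiv ℚ hαint).symm ⟨z, hzmem⟩
    have hf0 : f0 (IntermediateField.AdjoinSimple.gen ℚ α) = z :=
      IntermediateField.algHomAdjoinIntegralEquiv_symm_apply_gen ℚ hαint _
    let j1 : K →ₐ[ℚ] ℚ⟮α⟯ :=
      ((IntermediateField.equivOfEq hgen).symm.toAlgHom).comp
        IntermediateField.topEquiv.symm.toAlgHom
    have hj1 : j1 α = IntermediateField.AdjoinSimple.gen ℚ α := rfl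
    obtain ⟨i, hi, hσi⟩ := L.surj (f0.comp j1).toRingHom
    refine ⟨⟨i, by omega⟩, ?_⟩
    show L.σ i α = z
    rw [hσi]
    show f0 (j1 α) = z
    rw [hj1, hf0]
  -- conjugation facts
  have hc6 : x 6 = (starRingEnd ℂ) (x 2) := by
    have h := L.conjRel 0 (by norm_num)
    show L.σ ((6:Fin 10):ℕ) α = _
    rw [show ((6:Fin 10):ℕ) = 2 + 4 + 0 from rfl, h]
    rfl
  have hc7 : x 7 = (starRingEnd ℂ) (x 3) := by
    have h := L.conjRel 1 (by norm_num)
    show L.σ ((7:Fin 10):ℕ) α = _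
    rw [show ((7:Fin 10):ℕ) = 2 + 4 + 1 from rfl, h]
    rfl
  have hc8 : x 8 = (starRingEnd ℂ) (x 4) := by
    have h := L.conjRel 2 (by norm_num)
    show L.σ ((8:Fin 10):ℕ) α = _
    rw [show ((8:Fin 10):ℕ) = 2 + 4 + 2 from rfl, h]
    rfl
  have hc9 : x 9 = (starRingEnd ℂ) (x 5) := by
    have h := L.conjRel 3 (by norm_num)
    show L.σ ((9:Fin 10):ℕ) α = _
    rw [show ((9:Fin 10):ℕ) = 2 + 4 + 3 from rfl, h]
    rfl
  -- nonreal roots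
  have hnotreal : ∀ i : Fin 10, 2 ≤ (i:ℕ) → (starRingEnd ℂ) (x i) ≠ x i := by
    intro i hi hcon
    apply L.notReal (i:ℕ) hi (by have := i.isLt; omega)
    rw [ComplexEmbedding.isReal_iff]
    exact emb_ext _ _ hcon
  -- degree facts
  have hne_bot : ∀ β : K, β ∈ (⊥ : IntermediateField ℚ K) → α ≠ β := by
    intro β hβ hαβ
    rw [hαβ] at hgen
    have hb : IntermediateField.adjoin ℚ {β} = ⊥ :=
      IntermediateField.adjoin_eq_bot_iff.mpr (by simpa using hβ)
    rw [hb] at hgen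
    have h10 : (1 : ℕ) = Module.finrank ℚ K := by
      rw [← IntermediateField.finrank_bot (F := ℚ) (E := K), hgen,
        IntermediateField.finrank_top']
    rw [hdeg] at h10
    omega
  have hα1 : α ≠ 1 := hne_bot 1 (one_mem ⊥)
  have hαm1 : α ≠ -1 := hne_bot (-1) (neg_mem (one_mem ⊥))
  -- the quantity a
  set a : ℝ := ‖x 2‖ with hadef
  have h1' : x 0 * (a : ℂ) ^ 2 = 1 := h1
  have h2' : x 1 * ((‖x 3‖ : ℝ) : ℂ) ^ 2 = 1 := h2
  have h3' : ‖x 4‖ = 1 := h3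
  have h4' : ‖x 5‖ = 1 := h4
  have hane : a ≠ 0 := by
    intro h
    rw [h] at h1'
    simp at h1'
  have hapos : 0 < a := lt_of_le_of_ne (norm_nonneg _) (Ne.symm hane)
  have hx0 : x 0 = ((a : ℂ) ^ 2)⁻¹ := eq_inv_of_mul_eq_one_left h1'
  have ha1 : a ≠ 1 := by
    intro h
    apply hα1
    apply (L.σ ((0:Fin 10):ℕ)).injective
    have : x 0 = 1 := by rw [hx0, h]; norm_num
    rw [map_one]
    exact this
  -- inverse of α
  have hαne : α ≠ 0 := by
    intro h
    have h0 : x 0 = 0 := by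
      show L.σ _ α = 0
      rw [h, map_zero]
    rw [h0] at h1'
    simp at h1'
  have hxne : ∀ i : Fin 10, x i ≠ 0 := by
    intro i h
    apply hαne
    apply (L.σ (i:ℕ)).injective
    rw [map_zero]; exact h
  have hQint : IsIntegral ℚ (α⁻¹) := IsIntegral.of_finite ℚ _
  set Q : Polynomial ℚ := minpoly ℚ (α⁻¹) with hQdef
  have hQroot : ∀ i : Fin 10, aeval (x i)⁻¹ Q = 0 := by
    intro i
    have h5 : aeval ((L.σ (i:ℕ)).toRatAlgHom (α⁻¹)) Q = 0 := by
      rw [aeval_algHom_apply, hQdef, minpoly.aeval, map_zero]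
    have h6 : (L.σ (i:ℕ)).toRatAlgHom (α⁻¹) = (x i)⁻¹ := by
      show L.σ (i:ℕ) (α⁻¹) = (x i)⁻¹
      rw [map_inv₀]
    rwa [h6] at h5
  have hconjinv : ∀ z : ℂ, ‖z‖ = 1 → (starRingEnd ℂ) z = z⁻¹ := by
    intro z hz
    have : z * (starRingEnd ℂ) z = 1 := by
      rw [Complex.mul_conj, Complex.normSq_eq_norm_sq, hz]
      norm_num
    exact eq_inv_of_mul_eq_one_right this
  have hx9 : x 9 = (x 5)⁻¹ := by rw [hc9, hconjinv _ h4']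
  have hPQ : P = Q := by
    have ha' : P = minpoly ℚ (x 9) :=
      minpoly.eq_of_irreducible_of_monic hPirr (hroot 9) hPmonic
    have hb' : Q = minpoly ℚ (x 9) :=
      minpoly.eq_of_irreducible_of_monic (minpoly.irreducible hQint)
        (by rw [hx9]; exact hQroot 5) (minpoly.monic hQint)
    rw [ha', hb']
  have hinvroot : ∀ i : Fin 10, aeval ((x i)⁻¹) P = 0 := by
    intro i; rw [hPQ]; exact hQroot i
  -- x 1 = (x 0)⁻¹
  have hx0conj : (starRingEnd ℂ) (x 0) = x 0 := by
    rw [hx0]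
    simp
  have hx1 : x 1 = (x 0)⁻¹ := by
    obtain ⟨j, hj⟩ := hroot_idx ((x 0)⁻¹) (hinvroot 0)
    have hjreal : (starRingEnd ℂ) (x j) = x j := by
      rw [hj, map_inv₀, hx0conj]
    have hj2 : (j : ℕ) < 2 := by
      by_contra h
      exact hnotreal j (by omega) hjreal
    have hj01 : j = 0 ∨ j = 1 := by
      rcases j with ⟨jv, hjv⟩
      interval_cases jv
      · left; rfl
      · right; rfl
    rcases hj01 with rfl | rfl
    · exfalso
      have hsq : x 0 * x 0 = 1 := by
        nth_rewrite 2 [hj]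
        exact mul_inv_cancel₀ (hxne 0)
      rcases mul_self_eq_one_iff.mp hsq with h | h
      · exact hα1 ((L.σ ((0:Fin 10):ℕ)).injective (by rw [map_one]; exact h))
      · exact hαm1 ((L.σ ((0:Fin 10):ℕ)).injective (by rw [map_neg, map_one]; exact h))
    · exact hj
  -- absolute values
  have hloga : Real.log a ≠ 0 := by
    intro h
    rcases Real.log_eq_zero.mp h with h | h | h
    · exact hane h
    · exact ha1 h
    · nlinarith
  have hzpow : ∀ k l : ℤ, a ^ k = a ^ l → k = l := by
    intro k l hkl
    have h := congrArg Real.log hkl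
    rw [Real.log_zpow, Real.log_zpow] at h
    exact_mod_cast mul_right_cancel₀ hloga h
  have hb : ‖x 3‖ = a⁻¹ := by
    have hA1 : ‖x 1‖ = a ^ 2 := by
      rw [hx1, norm_inv, hx0]
      rw [norm_inv, inv_inv, norm_pow, Complex.norm_real, Real.norm_eq_abs, abs_of_nonneg hapos.le]
    have habs2 : ‖x 1‖ * (‖x 3‖) ^ 2 = 1 := by
      have := congrArg (‖·‖) h2'
      rwa [norm_mul, norm_pow, Complex.norm_real, Real.norm_eq_abs,
        abs_of_nonneg (norm_nonneg _), norm_one] at this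
    have hprod : (a * ‖x 3‖) * (a * ‖x 3‖) = 1 := by
      rw [hA1] at habs2
      ring_nf
      ring_nf at habs2
      nlinarith [habs2]
    rcases mul_self_eq_one_iff.mp hprod with h | h
    · exact eq_inv_of_mul_eq_one_right h
    · exfalso
      nlinarith [norm_nonneg (x 3), hapos]
  have habs : ∀ i : Fin 10, ‖x i‖ = a ^ (eE i) := by
    intro i
    fin_cases i
    · show ‖x 0‖ = a ^ (eE 0)
      rw [hx0, norm_inv, norm_pow, Complex.norm_real, Real.norm_eq_abs, abs_of_nonneg hapos.le]
      rw [show eE 0 = -2 from rfl]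
      rw [zpow_neg, zpow_two]
      ring_nf
    · show ‖x 1‖ = a ^ (eE 1)
      rw [hx1, norm_inv, hx0, norm_inv, inv_inv, norm_pow, Complex.norm_real, Real.norm_eq_abs,
        abs_of_nonneg hapos.le, show eE 1 = 2 from rfl, zpow_two]
      ring_nf
    · show ‖x 2‖ = a ^ (eE 2)
      rw [show eE 2 = 1 from rfl, zpow_one]
    · show ‖x 3‖ = a ^ (eE 3)
      rw [hb, show eE 3 = -1 from rfl, zpow_neg_one]
    · show ‖x 4‖ = a ^ (eE 4)
      rw [h3', show eE 4 = 0 from rfl, zpow_zero]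
    · show ‖x 5‖ = a ^ (eE 5)
      rw [h4', show eE 5 = 0 from rfl, zpow_zero]
    · show ‖x 6‖ = a ^ (eE 6)
      rw [hc6, Complex.norm_conj, show eE 6 = 1 from rfl, zpow_one]
    · show ‖x 7‖ = a ^ (eE 7)
      rw [hc7, Complex.norm_conj, hb, show eE 7 = -1 from rfl, zpow_neg_one]
    · show ‖x 8‖ = a ^ (eE 8)
      rw [hc8, Complex.norm_conj, h3', show eE 8 = 0 from rfl, zpow_zero]
    · show ‖x 9‖ = a ^ (eE 9)
      rw [hc9, Complex.norm_conj, h4', show eE 9 = 0 from rfl, zpow_zero]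
  -- the index of (x 2)⁻¹
  obtain ⟨w, hw⟩ := hroot_idx ((x 2)⁻¹) (hinvroot 2)
  have hwabs : ‖x w‖ = a⁻¹ := by rw [hw, norm_inv]
  have hew : eE w = -1 := by
    apply hzpow
    rw [← habs w, hwabs, zpow_neg_one]
  have hw37 : w = 3 ∨ w = 7 := by
    fin_cases w <;> revert hew <;> decide
  -- Galois action
  haveI hsplitfact : Fact (P.map (algebraMap ℚ ℂ)).Splits := ⟨IsAlgClosed.splits _⟩
  have hmem : ∀ i : Fin 10, x i ∈ P.rootSet ℂ := by
    intro i
    rw [mem_rootSet]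
    exact ⟨hPne, hroot i⟩
  set r : Fin 10 → P.rootSet ℂ := fun i => ⟨x i, hmem i⟩ with hrdef
  haveI hPT := Polynomial.Gal.galAction_isPretransitive P ℂ hPirr
  obtain ⟨g, hg⟩ := MulAction.exists_smul_eq P.Gal (r 4) (r 2)
  set jm : P.SplittingField →+* ℂ := algebraMap P.SplittingField ℂ with hjmdef
  have hcoe : ∀ b : P.rootSet ℂ,
      (b : ℂ) = jm ((Polynomial.Gal.rootsEquivRoots P ℂ).symm b : P.SplittingField) := by
    intro b
    conv_lhs => rw [← Equiv.apply_symm_apply (Polynomial.Gal.rootsEquivRoots P ℂ) b]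
    rfl
  have hsmul : ∀ b : P.rootSet ℂ, ((g • b : P.rootSet ℂ) : ℂ) =
      jm (g ((Polynomial.Gal.rootsEquivRoots P ℂ).symm b : P.SplittingField)) := by
    intro b
    rw [Polynomial.Gal.smul_def]
    rfl
  have hex : ∀ i : Fin 10, ∃ j : Fin 10, x j = ((g • r i : P.rootSet ℂ) : ℂ) := by
    intro i
    exact hroot_idx _ ((mem_rootSet.mp (g • r i).2).2)
  choose n hn using hex
  have hninj : Function.Injective n := by
    intro i j hij
    apply hσ_inj
    have hgij : (g • r i : P.rootSet ℂ) = g • r j := by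
      apply Subtype.ext
      rw [← hn i, ← hn j, hij]
    have hrij : r i = r j := MulAction.injective g hgij
    exact congrArg Subtype.val hrij
  have hprod2 : ∀ b c : Fin 10, x b * x c = 1 → x (n b) * x (n c) = 1 := by
    intro b c hbc
    have hinner : ((Polynomial.Gal.rootsEquivRoots P ℂ).symm (r b) : P.SplittingField) *
        ((Polynomial.Gal.rootsEquivRoots P ℂ).symm (r c) : P.SplittingField) = 1 := by
      apply jm.injective
      rw [map_mul, map_one, ← hcoe, ← hcoe]
      exact hbc
    rw [hn b, hn c, hsmul, hsmul, ← map_mul, ← map_mul, hinner, map_one, map_one]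
  have hprod3 : ∀ b c d : Fin 10, x b * x c * x d = 1 →
      x (n b) * x (n c) * x (n d) = 1 := by
    intro b c d hbcd
    have hinner : ((Polynomial.Gal.rootsEquivRoots P ℂ).symm (r b) : P.SplittingField) *
        ((Polynomial.Gal.rootsEquivRoots P ℂ).symm (r c) : P.SplittingField) *
        ((Polynomial.Gal.rootsEquivRoots P ℂ).symm (r d) : P.SplittingField) = 1 := by
      apply jm.injective
      rw [map_mul, map_mul, map_one, ← hcoe, ← hcoe, ← hcoe]
      exact hbcd
    rw [hn b, hn c, hn d, hsmul, hsmul, hsmul, ← map_mul, ← map_mul, ← map_mul, ← map_mul,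
      hinner, map_one, map_one]
  have hn4 : n 4 = 2 := by
    apply hσ_inj
    rw [hn 4, hg]
  -- the triple relation and its transport
  have htriple : x 0 * x 2 * x 6 = 1 := by
    rw [mul_assoc, hc6, Complex.mul_conj, Complex.normSq_eq_norm_sq]
    push_cast
    exact h1'
  have htr : x (n 0) * x (n 2) * x (n 6) = 1 := hprod3 _ _ _ htriple
  have hsum : eE (n 0) + eE (n 2) + eE (n 6) = 0 := by
    apply hzpow _ 0
    rw [zpow_zero, zpow_add₀ hane, zpow_add₀ hane, ← habs, ← habs, ← habs]
    have := congrArg (‖·‖) htr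
    rwa [norm_mul, norm_mul, norm_one] at this
  have heq1 : eE (n 4) = 1 := by rw [hn4]; rfl
  -- case split on the partner of x 2
  rcases hw37 with rfl | rfl
  · -- w = 3 : matching mmA
    have hp6 : x 7 = (x 6)⁻¹ := by rw [hc7, hw, map_inv₀, ← hc6]
    have hp4 : x 8 = (x 4)⁻¹ := by rw [hc8, hconjinv _ h3']
    have hpair : ∀ i : Fin 10, x (mmA i) = (x i)⁻¹ := by
      intro i
      fin_cases i
      · exact hx1
      · show x 0 = (x 1)⁻¹
        rw [hx1, inv_inv]
      · exact hw
      · show x 2 = (x 3)⁻¹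
        rw [hw, inv_inv]
      · exact hp4
      · exact hx9
      · exact hp6
      · show x 6 = (x 7)⁻¹
        rw [hp6, inv_inv]
      · show x 4 = (x 8)⁻¹
        rw [hp4, inv_inv]
      · show x 5 = (x 9)⁻¹
        rw [hx9, inv_inv]
    have hxpair : ∀ i : Fin 10, x i * x (mmA i) = 1 := by
      intro i; rw [hpair i]; exact mul_inv_cancel₀ (hxne i)
    have hcomm : ∀ i : Fin 10, mmA (n i) = n (mmA i) := by
      intro i
      apply hσ_inj
      rw [hpair (n i)]
      exact (eq_inv_of_mul_eq_one_right (hprod2 i (mmA i) (hxpair i))).symm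
    have hnodup : ([n 0, mmA (n 0), n 2, mmA (n 2), n 6, mmA (n 6), n 4, mmA (n 4)] :
        List (Fin 10)).Nodup := by
      rw [hcomm 0, hcomm 2, hcomm 6, hcomm 4]
      show (List.map n [0, 1, 2, 3, 6, 7, 4, 8]).Nodup
      exact List.Nodup.map hninj (by decide)
    exact keyA (n 0) (n 2) (n 6) (n 4) hnodup heq1 hsum
  · -- w = 7 : matching mmB
    have h3i : x 3 = (x 6)⁻¹ := by
      have h7 : (starRingEnd ℂ) (x 7) = (starRingEnd ℂ) ((x 2)⁻¹) := congrArg _ hw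
      rw [hc7, Complex.conj_conj, map_inv₀, ← hc6] at h7
      exact h7
    have hp3 : x 6 = (x 3)⁻¹ := by rw [h3i, inv_inv]
    have hp4 : x 8 = (x 4)⁻¹ := by rw [hc8, hconjinv _ h3']
    have hpair : ∀ i : Fin 10, x (mmB i) = (x i)⁻¹ := by
      intro i
      fin_cases i
      · exact hx1
      · show x 0 = (x 1)⁻¹
        rw [hx1, inv_inv]
      · exact hw
      · exact hp3
      · exact hp4
      · exact hx9
      · exact h3i
      · show x 2 = (x 7)⁻¹
        rw [hw, inv_inv]
      · show x 4 = (x 8)⁻¹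
        rw [hp4, inv_inv]
      · show x 5 = (x 9)⁻¹
        rw [hx9, inv_inv]
    have hxpair : ∀ i : Fin 10, x i * x (mmB i) = 1 := by
      intro i; rw [hpair i]; exact mul_inv_cancel₀ (hxne i)
    have hcomm : ∀ i : Fin 10, mmB (n i) = n (mmB i) := by
      intro i
      apply hσ_inj
      rw [hpair (n i)]
      exact (eq_inv_of_mul_eq_one_right (hprod2 i (mmB i) (hxpair i))).symm
    have hnodup : ([n 0, mmB (n 0), n 2, mmB (n 2), n 6, mmB (n 6), n 4, mmB (n 4)] :
        List (Fin 10)).Nodup := by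
      rw [hcomm 0, hcomm 2, hcomm 6, hcomm 4]
      show (List.map n [0, 1, 2, 7, 6, 3, 4, 8]).Nodup
      exact List.Nodup.map hninj (by decide)
    exact keyB (n 0) (n 2) (n 6) (n 4) hnodup heq1 hsum
end

section
/- Let S = −12 + 9√2 and P = 33 − 22√2 (real numbers). Then every complex root of the polynomial x^6 + S·x^5 + (P − S)·x^4 + (2P − S² − 2)·x^3 + (P − S)·x^2 + S·x + 1 has modulus 1. -/
/-- If `z + z⁻¹` equals a real number `r` with `r² < 4`, then `|z| = 1`. -/
lemma aux_unit_circle (z : ℂ) (hz0 : z ≠ 0) (r : ℝ) (hr : r ^ 2 < 4)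
    (h : z + z⁻¹ = (r : ℂ)) : ‖z‖ = 1 := by
  have hq : z ^ 2 - (r : ℂ) * z + 1 = 0 := by
    field_simp at h
    linear_combination h
  have hqc : (starRingEnd ℂ) z ^ 2 - (r : ℂ) * (starRingEnd ℂ) z + 1 = 0 := by
    have := congrArg (starRingEnd ℂ) hq
    simpa [map_sub, map_add, map_mul, map_pow, Complex.conj_ofReal] using this
  by_cases hc : (starRingEnd ℂ) z = z
  · have hre : ((z.re : ℝ) : ℂ) = z := Complex.conj_eq_iff_re.mp hc
    set x := z.re with hx
    have hxr : x ^ 2 - r * x + 1 = 0 := by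
      have h2 := hq
      rw [← hre] at h2
      exact_mod_cast h2
    nlinarith [sq_nonneg (x - r / 2)]
  · have hdiff : (z - (starRingEnd ℂ) z) * (z + (starRingEnd ℂ) z - (r : ℂ)) = 0 := by
      linear_combination hq - hqc
    rcases mul_eq_zero.mp hdiff with h' | h'
    · exact absurd (sub_eq_zero.mp h').symm hc
    · have hsum : z + (starRingEnd ℂ) z = (r : ℂ) := sub_eq_zero.mp h'
      have hprod : z * (starRingEnd ℂ) z = 1 := by linear_combination z * hsum - hq
      have hnsq : (Complex.normSq z : ℂ) = 1 := by rw [← Complex.mul_conj]; exact hprod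
      have h1 : Complex.normSq z = 1 := by exact_mod_cast hnsq
      have h2 : ‖z‖ ^ 2 = 1 := by rw [Complex.sq_norm]; exact h1
      nlinarith [norm_nonneg z]

set_option maxHeartbeats 1000000 in
/-- Let `S = −12 + 9√2` and `P = 33 − 22√2`.  Then every complex root of
`x^6 + S·x^5 + (P−S)·x^4 + (2P−S²−2)·x^3 + (P−S)·x^2 + S·x + 1` has modulus `1`. -/
theorem roots_of_G_unimodular (S P : ℝ)
    (hS : S = -12 + 9 * Real.sqrt 2) (hP : P = 33 - 22 * Real.sqrt 2) :
    ∀ z : ℂ, z ^ 6 + (S : ℂ) * z ^ 5 + ((P : ℂ) - (S : ℂ)) * z ^ 4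
        + (2 * (P : ℂ) - (S : ℂ) ^ 2 - 2) * z ^ 3 + ((P : ℂ) - (S : ℂ)) * z ^ 2
        + (S : ℂ) * z + 1 = 0 →
      ‖z‖ = 1 := by
  subst hS hP
  intro z hz
  set s : ℝ := Real.sqrt 2 with hsdef
  have hs2 : s ^ 2 = 2 := Real.sq_sqrt (by norm_num)
  have hs_pos : 0 < s := Real.sqrt_pos.mpr (by norm_num)
  -- z ≠ 0
  have hz0 : z ≠ 0 := by
    intro h
    rw [h] at hz
    simp at hz
  -- the real cubic
  set f : ℝ → ℝ := fun t => t ^ 3 + (-12 + 9 * s) * t ^ 2 + (42 - 31 * s) * t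
    + (-218 + 154 * s) with hfdef
  have hcont : Continuous f := by fun_prop
  have hfm2 : f (-2) < 0 := by
    simp only [hfdef]; nlinarith [hs2, hs_pos]
  have hfm1 : 0 < f (-1) := by
    simp only [hfdef]; nlinarith [hs2, hs_pos]
  have hf0 : f 0 < 0 := by
    simp only [hfdef]; nlinarith [hs2, hs_pos]
  have hf2 : 0 < f 2 := by
    simp only [hfdef]; nlinarith [hs2, hs_pos]
  -- three real roots by IVT
  obtain ⟨r1, hr1mem, hr1⟩ := intermediate_value_Icc (by norm_num : (-2:ℝ) ≤ -1)
    hcont.continuousOn ⟨hfm2.le, hfm1.le⟩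
  obtain ⟨r2, hr2mem, hr2⟩ := intermediate_value_Icc' (by norm_num : (-1:ℝ) ≤ 0)
    hcont.continuousOn ⟨hf0.le, hfm1.le⟩
  obtain ⟨r3, hr3mem, hr3⟩ := intermediate_value_Icc (by norm_num : (0:ℝ) ≤ 2)
    hcont.continuousOn ⟨hf0.le, hf2.le⟩
  obtain ⟨hr1l, hr1u⟩ := hr1mem
  obtain ⟨hr2l, hr2u⟩ := hr2mem
  obtain ⟨hr3l, hr3u⟩ := hr3mem
  have hr1ne : r1 ≠ -1 := fun h => by rw [h] at hr1; exact absurd hr1 hfm1.ne'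
  have hr2ne1 : r2 ≠ -1 := fun h => by rw [h] at hr2; exact absurd hr2 hfm1.ne'
  have hr2ne0 : r2 ≠ 0 := fun h => by rw [h] at hr2; exact absurd hr2 hf0.ne
  have hr3ne0 : r3 ≠ 0 := fun h => by rw [h] at hr3; exact absurd hr3 hf0.ne
  have hr1ne2 : r1 ≠ -2 := fun h => by rw [h] at hr1; exact absurd hr1 hfm2.ne
  have hr3ne2 : r3 ≠ 2 := fun h => by rw [h] at hr3; exact absurd hr3 hf2.ne'
  have hb1 : -2 < r1 := lt_of_le_of_ne hr1l (Ne.symm hr1ne2)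
  have hb1' : r1 < -1 := lt_of_le_of_ne hr1u hr1ne
  have hb2 : -1 < r2 := lt_of_le_of_ne hr2l (Ne.symm hr2ne1)
  have hb2' : r2 < 0 := lt_of_le_of_ne hr2u hr2ne0
  have hb3 : 0 < r3 := lt_of_le_of_ne hr3l (Ne.symm hr3ne0)
  have hb3' : r3 < 2 := lt_of_le_of_ne hr3u hr3ne2
  have h12 : r1 ≠ r2 := by linarith
  have h13 : r1 ≠ r3 := by linarith
  have h23 : r2 ≠ r3 := by linarith
  -- root equations
  have e1 : r1 ^ 3 + (-12 + 9 * s) * r1 ^ 2 + (42 - 31 * s) * r1 + (-218 + 154 * s) = 0 := by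
    have := hr1; simp only [hfdef] at this; linarith [this]
  have e2 : r2 ^ 3 + (-12 + 9 * s) * r2 ^ 2 + (42 - 31 * s) * r2 + (-218 + 154 * s) = 0 := by
    have := hr2; simp only [hfdef] at this; linarith [this]
  have e3 : r3 ^ 3 + (-12 + 9 * s) * r3 ^ 2 + (42 - 31 * s) * r3 + (-218 + 154 * s) = 0 := by
    have := hr3; simp only [hfdef] at this; linarith [this]
  -- Vieta
  have q12 : r1 ^ 2 + r1 * r2 + r2 ^ 2 + (-12 + 9 * s) * (r1 + r2) + (42 - 31 * s) = 0 := by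
    have hne : r1 - r2 ≠ 0 := sub_ne_zero.mpr h12
    apply mul_right_cancel₀ hne
    rw [zero_mul]
    linear_combination e1 - e2
  have q23 : r2 ^ 2 + r2 * r3 + r3 ^ 2 + (-12 + 9 * s) * (r2 + r3) + (42 - 31 * s) = 0 := by
    have hne : r2 - r3 ≠ 0 := sub_ne_zero.mpr h23
    apply mul_right_cancel₀ hne
    rw [zero_mul]
    linear_combination e2 - e3
  have hsum : r1 + r2 + r3 + (-12 + 9 * s) = 0 := by
    have hne : r1 - r3 ≠ 0 := sub_ne_zero.mpr h13
    apply mul_right_cancel₀ hne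
    rw [zero_mul]
    linear_combination q12 - q23
  have hB : (42 - 31 * s) = r1 * r2 + r1 * r3 + r2 * r3 := by
    linear_combination q12 - (r1 + r2) * hsum
  have hC : (-218 + 154 * s) = -(r1 * r2 * r3) := by
    linear_combination e1 - r1 ^ 2 * hsum - r1 * hB
  -- transfer to ℂ
  set w : ℂ := z + z⁻¹ with hwdef
  have hw : w ^ 3 + (-12 + 9 * (s : ℂ)) * w ^ 2 + (42 - 31 * (s : ℂ)) * w
      + (-218 + 154 * (s : ℂ)) = 0 := by
    have h3 : z ^ 3 ≠ 0 := pow_ne_zero _ hz0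
    apply mul_left_cancel₀ h3
    rw [mul_zero, hwdef]
    field_simp
    push_cast at hz
    have hs2c : (s : ℂ) ^ 2 = 2 := by exact_mod_cast congrArg (fun x : ℝ => (x : ℂ)) hs2
    linear_combination hz + 81 * z ^ 3 * hs2c
  have hsum' : (r1 : ℂ) + r2 + r3 + (-12 + 9 * (s : ℂ)) = 0 := by
    have := congrArg (fun x : ℝ => (x : ℂ)) hsum
    push_cast at this
    exact this
  have hB' : (42 : ℂ) - 31 * s = (r1 : ℂ) * r2 + (r1 : ℂ) * r3 + (r2 : ℂ) * r3 := by
    have := congrArg (fun x : ℝ => (x : ℂ)) hB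
    push_cast at this
    exact this
  have hC' : (-218 : ℂ) + 154 * s = -((r1 : ℂ) * r2 * r3) := by
    have := congrArg (fun x : ℝ => (x : ℂ)) hC
    push_cast at this
    exact this
  have hfac : (w - r1) * (w - r2) * (w - r3) = 0 := by
    linear_combination hw - w ^ 2 * hsum' - w * hB' - hC'
  have habs : ∀ r : ℝ, r ^ 2 < 4 → w = (r : ℂ) → ‖z‖ = 1 := by
    intro r hr hwr
    exact aux_unit_circle z hz0 r hr (by rw [← hwdef]; exact hwr)
  rcases mul_eq_zero.mp hfac with h | h
  · rcases mul_eq_zero.mp h with h | h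
    · exact habs r1 (by nlinarith) (sub_eq_zero.mp h)
    · exact habs r2 (by nlinarith) (sub_eq_zero.mp h)
  · exact habs r3 (by nlinarith) (sub_eq_zero.mp h)
end

section
/- Let P(x) = x^12 − 24x^11 + 72x^10 − 448x^9 − 191x^8 − 440x^7 − 432x^6 − 440x^5 − 191x^4 − 448x^3 + 72x^2 − 24x + 1. Then: (i) P has exactly two real roots, and they are of the form u₁ and u₁⁻¹ with u₁ > 1; (ii) there exists a non-real complex root u₃ of P such that conj(u₃), u₃⁻¹ and conj(u₃)⁻¹ are also roots of P and u₁ · u₃ · conj(u₃) = 1; (iii) the remaining six complex roots of P all have modulus 1. -/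
/-- `z` is a root of
`P(x) = x^12 − 24x^11 + 72x^10 − 448x^9 − 191x^8 − 440x^7 − 432x^6 − 440x^5 − 191x^4 − 448x^3 + 72x^2 − 24x + 1`. -/
def IsRootP (z : ℂ) : Prop :=
  z ^ 12 - 24 * z ^ 11 + 72 * z ^ 10 - 448 * z ^ 9 - 191 * z ^ 8 - 440 * z ^ 7
    - 432 * z ^ 6 - 440 * z ^ 5 - 191 * z ^ 4 - 448 * z ^ 3 + 72 * z ^ 2 - 24 * z + 1 = 0

namespace RP12

noncomputable def s : ℝ := Real.sqrt 2
noncomputable def d : ℝ := Real.sqrt (174 + 128 * s)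
noncomputable def a : ℝ := (12 + 9*s + d)/2
noncomputable def b : ℝ := (12 + 9*s - d)/2

lemma s_nonneg : 0 ≤ s := Real.sqrt_nonneg 2
lemma hs2 : s^2 = 2 := Real.sq_sqrt (by norm_num)
lemma s_lb : 1.41421 < s := by nlinarith [hs2, s_nonneg]
lemma s_ub : s < 1.41422 := by nlinarith [hs2, s_nonneg]
lemma d_nonneg : 0 ≤ d := Real.sqrt_nonneg _
lemma hd2 : d^2 = 174 + 128*s := Real.sq_sqrt (by nlinarith [s_nonneg])
lemma d_lb : 18.841 < d := by nlinarith [hd2, d_nonneg, s_lb]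
lemma d_ub : d < 18.843 := by nlinarith [hd2, d_nonneg, s_ub]
lemma a_lb : 21.7844 < a := by unfold a; nlinarith [s_lb, d_lb]
lemma a_ub : a < 21.7856 := by unfold a; nlinarith [s_ub, d_ub]
lemma b_lb : 2.9424 < b := by unfold b; nlinarith [s_lb, d_ub]
lemma b_ub : b < 2.9435 := by unfold b; nlinarith [s_ub, d_lb]

noncomputable def F (z : ℂ) : ℂ := z^3 - a*z^2 + b*z - 1
noncomputable def G (z : ℂ) : ℂ := z^3 - b*z^2 + a*z - 1
noncomputable def Uv (z : ℂ) : ℂ := z^6 + (-12+9*s)*z^5 + (45-31*s)*z^4 + (-242+172*s)*z^3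
  + (45-31*s)*z^2 + (-12+9*s)*z + 1
noncomputable def Sv (z : ℂ) : ℂ := z^6 - (12+9*s)*z^5 + (45+31*s)*z^4 - (242+172*s)*z^3
  + (45+31*s)*z^2 - (12+9*s)*z + 1
noncomputable def Pv (z : ℂ) : ℂ :=
  z ^ 12 - 24 * z ^ 11 + 72 * z ^ 10 - 448 * z ^ 9 - 191 * z ^ 8 - 440 * z ^ 7
    - 432 * z ^ 6 - 440 * z ^ 5 - 191 * z ^ 4 - 448 * z ^ 3 + 72 * z ^ 2 - 24 * z + 1

lemma hs2C : (s:ℂ)^2 = 2 := by exact_mod_cast congrArg (Complex.ofReal) hs2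
lemma hd2C : (d:ℂ)^2 = 174 + 128*(s:ℂ) := by exact_mod_cast congrArg (Complex.ofReal) hd2

lemma FG_eq (z : ℂ) : F z * G z = Sv z := by
  unfold F G Sv a b
  push_cast
  linear_combination ((81/4)*z^4 - (81/2)*z^3 + (81/4)*z^2) * hs2C
    + (-(1/4)*z^4 - (1/2)*z^3 - (1/4)*z^2) * hd2C

lemma SU_eq (z : ℂ) : Sv z * Uv z = Pv z := by
  unfold Sv Uv Pv
  linear_combination (-(9*z^5 - 31*z^4 + 172*z^3 - 31*z^2 + 9*z)^2) * hs2C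

lemma P_eq (z : ℂ) : Pv z = F z * G z * Uv z := by rw [FG_eq, SU_eq]

lemma isRootP_iff (z : ℂ) : IsRootP z ↔ F z * G z * Uv z = 0 := by
  rw [← P_eq]; exact Iff.rfl

noncomputable def c3 (y : ℝ) : ℝ := y^3 + (-12+9*s)*y^2 + (42-31*s)*y + (-218+154*s)

lemma c3_cont : Continuous c3 := by unfold c3; continuity
lemma c3_neg2 : c3 (-2) < 0 := by unfold c3; nlinarith [s_ub]
lemma c3_neg1 : 0 < c3 (-1) := by unfold c3; nlinarith [s_lb]
lemma c3_zero : c3 0 < 0 := by unfold c3; nlinarith [s_ub]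
lemma c3_two : 0 < c3 2 := by unfold c3; nlinarith [s_lb]

lemma c3_roots : ∃ r1 r2 r3 : ℝ, (-2 < r1 ∧ r1 < -1) ∧ (-1 < r2 ∧ r2 < 0) ∧ (0 < r3 ∧ r3 < 2)
    ∧ c3 r1 = 0 ∧ c3 r2 = 0 ∧ c3 r3 = 0 := by
  have h1 : (0:ℝ) ∈ Set.Icc (c3 (-2)) (c3 (-1)) := ⟨c3_neg2.le, c3_neg1.le⟩
  obtain ⟨r1, hr1m, hr1⟩ := intermediate_value_Icc (by norm_num : (-2:ℝ) ≤ -1) c3_cont.continuousOn h1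
  have h2 : (0:ℝ) ∈ Set.Icc (c3 0) (c3 (-1)) := ⟨c3_zero.le, c3_neg1.le⟩
  obtain ⟨r2, hr2m, hr2⟩ := intermediate_value_Icc' (by norm_num : (-1:ℝ) ≤ 0) c3_cont.continuousOn h2
  have h3 : (0:ℝ) ∈ Set.Icc (c3 0) (c3 2) := ⟨c3_zero.le, c3_two.le⟩
  obtain ⟨r3, hr3m, hr3⟩ := intermediate_value_Icc (by norm_num : (0:ℝ) ≤ 2) c3_cont.continuousOn h3
  refine ⟨r1, r2, r3, ⟨?_, ?_⟩, ⟨?_, ?_⟩, ⟨?_, ?_⟩, hr1, hr2, hr3⟩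
  · rcases lt_or_eq_of_le hr1m.1 with h | h
    · exact h
    · exact absurd hr1 (by rw [← h]; exact ne_of_lt c3_neg2)
  · rcases lt_or_eq_of_le hr1m.2 with h | h
    · exact h
    · exact absurd hr1 (by rw [h]; exact ne_of_gt c3_neg1)
  · rcases lt_or_eq_of_le hr2m.1 with h | h
    · exact h
    · exact absurd hr2 (by rw [← h]; exact ne_of_gt c3_neg1)
  · rcases lt_or_eq_of_le hr2m.2 with h | h
    · exact h
    · exact absurd hr2 (by rw [h]; exact ne_of_lt c3_zero)
  · rcases lt_or_eq_of_le hr3m.1 with h | h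
    · exact h
    · exact absurd hr3 (by rw [← h]; exact ne_of_lt c3_zero)
  · rcases lt_or_eq_of_le hr3m.2 with h | h
    · exact h
    · exact absurd hr3 (by rw [h]; exact ne_of_gt c3_two)

lemma cubic_factor (e2 e1 e0 r1 r2 r3 : ℝ)
    (h12 : r1 ≠ r2) (h13 : r1 ≠ r3) (h23 : r2 ≠ r3)
    (hp1 : r1^3 + e2*r1^2 + e1*r1 + e0 = 0)
    (hp2 : r2^3 + e2*r2^2 + e1*r2 + e0 = 0)
    (hp3 : r3^3 + e2*r3^2 + e1*r3 + e0 = 0) :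
    ∀ y : ℂ, y^3 + e2*y^2 + e1*y + e0 = (y - r1)*(y - r2)*(y - r3) := by
  have hA12 : r1^2 + r1*r2 + r2^2 + e2*(r1+r2) + e1 = 0 := by
    have h : (r1 - r2) * (r1^2 + r1*r2 + r2^2 + e2*(r1+r2) + e1) = 0 := by
      linear_combination hp1 - hp2
    exact (mul_eq_zero.mp h).resolve_left (sub_ne_zero.mpr h12)
  have hA13 : r1^2 + r1*r3 + r3^2 + e2*(r1+r3) + e1 = 0 := by
    have h : (r1 - r3) * (r1^2 + r1*r3 + r3^2 + e2*(r1+r3) + e1) = 0 := by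
      linear_combination hp1 - hp3
    exact (mul_eq_zero.mp h).resolve_left (sub_ne_zero.mpr h13)
  have he2 : e2 = -(r1 + r2 + r3) := by
    have h : (r2 - r3) * (r1 + r2 + r3 + e2) = 0 := by linear_combination hA12 - hA13
    have := (mul_eq_zero.mp h).resolve_left (sub_ne_zero.mpr h23)
    linarith
  have he1 : e1 = r1*r2 + r1*r3 + r2*r3 := by
    rw [he2] at hA12; nlinarith [hA12]
  have he0 : e0 = -(r1*r2*r3) := by
    rw [he2, he1] at hp1; nlinarith [hp1]
  intro y
  rw [he2, he1, he0]
  push_cast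
  ring

lemma quad_unit (r : ℝ) (hr : -2 < r) (hr' : r < 2) (z : ℂ) (hz : z^2 - r*z + 1 = 0) :
    ‖z‖ = 1 ∧ z.im ≠ 0 := by
  have him : z.im ≠ 0 := by
    intro h0
    have hz' : z = (z.re : ℂ) := Complex.ext rfl (by simp [h0])
    rw [hz'] at hz
    have hre : z.re^2 - r*z.re + 1 = 0 := by exact_mod_cast hz
    nlinarith [sq_nonneg (2*z.re - r)]
  have hconj : (starRingEnd ℂ z)^2 - r*(starRingEnd ℂ z) + 1 = 0 := by
    have := congrArg (starRingEnd ℂ) hz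
    simpa [map_sub, map_add, map_mul, map_pow, Complex.conj_ofReal] using this
  have hfac : (starRingEnd ℂ z - z) * (starRingEnd ℂ z - ((r:ℂ) - z)) = 0 := by
    linear_combination hconj - hz
  have hne : starRingEnd ℂ z - z ≠ 0 := by
    intro h
    exact him (Complex.conj_eq_iff_im.mp (sub_eq_zero.mp h))
  have h2 : starRingEnd ℂ z = (r:ℂ) - z :=
    sub_eq_zero.mp ((mul_eq_zero.mp hfac).resolve_left hne)
  have hnorm : z * starRingEnd ℂ z = 1 := by
    rw [h2]; linear_combination -hz
  have habs : (‖z‖)^2 = 1 := by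
    have := congrArg (‖·‖) hnorm
    rwa [norm_mul, Complex.norm_conj, norm_one, ← sq] at this
  exact ⟨by nlinarith [norm_nonneg z], him⟩

lemma Uroot (z : ℂ) (hz : Uv z = 0) : ‖z‖ = 1 ∧ z.im ≠ 0 := by
  have hz0 : z ≠ 0 := by
    intro h; rw [h] at hz; unfold Uv at hz; simp at hz
  obtain ⟨r1, r2, r3, hb1, hb2, hb3, hc1, hc2, hc3⟩ := c3_roots
  have hfac := cubic_factor (-12+9*s) (42-31*s) (-218+154*s) r1 r2 r3
    (by linarith [hb1.2, hb2.1]) (by linarith [hb1.2, hb2.1, hb2.2, hb3.1])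
    (by linarith [hb2.2, hb3.1])
    (by unfold c3 at hc1; linarith) (by unfold c3 at hc2; linarith)
    (by unfold c3 at hc3; linarith)
  set y : ℂ := z + z⁻¹ with hy
  have hUy : z^3 * (y^3 + (-12+9*(s:ℂ))*y^2 + (42-31*(s:ℂ))*y + (-218+154*(s:ℂ))) = Uv z := by
    unfold Uv
    rw [hy]
    field_simp
    ring
  have hcy : y^3 + ((-12+9*s : ℝ):ℂ)*y^2 + ((42-31*s : ℝ):ℂ)*y + ((-218+154*s : ℝ):ℂ) = 0 := by
    have h3 : z^3 ≠ 0 := pow_ne_zero 3 hz0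
    have h0 : z^3 * (y^3 + (-12+9*(s:ℂ))*y^2 + (42-31*(s:ℂ))*y + (-218+154*(s:ℂ))) = 0 := by
      rw [hUy]; exact hz
    have h := (mul_eq_zero.mp h0).resolve_left h3
    push_cast
    convert h using 2
  rw [hfac y] at hcy
  have hquadz : ∀ r : ℝ, y = (r:ℂ) → z^2 - r*z + 1 = 0 := by
    intro r hyr
    have h : z * (y - r) = z^2 - r*z + 1 := by
      rw [hy]; field_simp; ring
    rw [hyr] at h; simp at h; linear_combination -h
  rcases mul_eq_zero.mp hcy with h | h
  · rcases mul_eq_zero.mp h with h' | h'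
    · exact quad_unit r1 hb1.1 (by linarith [hb1.2]) z (hquadz r1 (sub_eq_zero.mp h'))
    · exact quad_unit r2 (by linarith [hb2.1]) (by linarith [hb2.2]) z (hquadz r2 (sub_eq_zero.mp h'))
  · exact quad_unit r3 (by linarith [hb3.1]) hb3.2 z (hquadz r3 (sub_eq_zero.mp h))

noncomputable def fr (x : ℝ) : ℝ := x^3 - a*x^2 + b*x - 1

lemma fr_cont : Continuous fr := by unfold fr; continuity
lemma fr_lo : fr 21.6 < 0 := by unfold fr; nlinarith [a_lb, b_ub]
lemma fr_hi : 0 < fr 21.7 := by unfold fr; nlinarith [a_ub, b_lb]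

lemma F_real (x : ℝ) : F (x:ℂ) = ((fr x : ℝ) : ℂ) := by unfold F fr; push_cast; ring

lemma G_rec (z : ℂ) (hz : z ≠ 0) : G z = -z^3 * F z⁻¹ := by
  unfold F G; field_simp; ring

lemma G_zero : G 0 = -1 := by unfold G; ring

end RP12

open RP12
/-- (i) `P` has exactly two real roots, of the form `u₁` and `u₁⁻¹` with
`u₁ > 1`;  (ii) there is a non-real complex root `u₃` of `P` such that `conj u₃`, `u₃⁻¹`
and `(conj u₃)⁻¹` are also roots and `u₁ · u₃ · conj u₃ = 1`;  (iii) the remaining six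
complex roots of `P` all have modulus `1`. -/
theorem roots_structure_of_P :
    ∃ (u₁ : ℝ) (u₃ : ℂ),
      1 < u₁ ∧
      IsRootP (u₁ : ℂ) ∧ IsRootP ((u₁ : ℂ)⁻¹) ∧
      (∀ x : ℝ, IsRootP (x : ℂ) → x = u₁ ∨ x = u₁⁻¹) ∧
      u₃.im ≠ 0 ∧
      IsRootP u₃ ∧ IsRootP (starRingEnd ℂ u₃) ∧
      IsRootP u₃⁻¹ ∧ IsRootP ((starRingEnd ℂ u₃)⁻¹) ∧
      (u₁ : ℂ) * u₃ * starRingEnd ℂ u₃ = 1 ∧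
      ∀ z : ℂ, IsRootP z → z ≠ (u₁ : ℂ) → z ≠ (u₁ : ℂ)⁻¹ →
        z ≠ u₃ → z ≠ starRingEnd ℂ u₃ → z ≠ u₃⁻¹ → z ≠ (starRingEnd ℂ u₃)⁻¹ →
        ‖z‖ = 1 := by
  -- obtain the real root u₁
  have hmem : (0:ℝ) ∈ Set.Icc (fr 21.6) (fr 21.7) := ⟨fr_lo.le, fr_hi.le⟩
  obtain ⟨u₁, hu₁m, hfu₁⟩ := intermediate_value_Icc (by norm_num : (21.6:ℝ) ≤ 21.7)
    fr_cont.continuousOn hmem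
  obtain ⟨hu₁lo, hu₁hi⟩ := hu₁m
  have hu₁pos : (0:ℝ) < u₁ := by linarith
  have hu₁ne : u₁ ≠ 0 := ne_of_gt hu₁pos
  have hfu₁' : u₁^3 - a*u₁^2 + b*u₁ - 1 = 0 := hfu₁
  -- auxiliary quantities
  set m : ℝ := a - u₁ with hm
  set c : ℝ := u₁⁻¹ with hcdef
  have hc : u₁ * c = 1 := mul_inv_cancel₀ hu₁ne
  have hcpos : 0 < c := by positivity
  have hclo : 0.046 < c := by
    rw [hcdef]
    rw [lt_inv_comm₀ (by norm_num) hu₁pos]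
    linarith
  have hchi : c < 0.0463 := by
    rw [hcdef]
    rw [inv_lt_comm₀ hu₁pos (by norm_num)]
    linarith
  have hmlo : 0.0844 < m := by rw [hm]; linarith [a_lb]
  have hmhi : m < 0.1856 := by rw [hm]; linarith [a_ub]
  have hb' : b = u₁ * m + c := by
    have h : b * u₁ = (u₁ * m + c) * u₁ := by
      rw [hm, hcdef]
      field_simp
      nlinarith [hfu₁']
    exact mul_right_cancel₀ hu₁ne h
  have hdisc : m^2 < 4*c := by nlinarith
  -- the complex root u₃
  set t : ℝ := Real.sqrt (c - m^2/4) with htdef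
  have ht2 : t^2 = c - m^2/4 := Real.sq_sqrt (by nlinarith)
  have htpos : 0 < t := Real.sqrt_pos.mpr (by nlinarith)
  set u₃ : ℂ := (↑(m/2) + ↑t * Complex.I) with hu₃def
  have him : u₃.im = t := by rw [hu₃def]; simp
  have hconj : starRingEnd ℂ u₃ = (↑(m/2) - ↑t * Complex.I) := by
    rw [hu₃def, map_add, map_mul, Complex.conj_ofReal, Complex.conj_ofReal, Complex.conj_I]
    ring
  have ht2C : (t:ℂ)^2 = (c:ℂ) - (m:ℂ)^2/4 := by exact_mod_cast congrArg Complex.ofReal ht2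
  have hsum : u₃ + starRingEnd ℂ u₃ = (m:ℂ) := by rw [hu₃def, hconj]; push_cast; ring
  have hprod : u₃ * starRingEnd ℂ u₃ = (c:ℂ) := by
    rw [hu₃def, hconj]
    push_cast
    linear_combination (-(t:ℂ)^2) * Complex.I_sq + ht2C
  have hmC : (m:ℂ) = (a:ℂ) - (u₁:ℂ) := by rw [hm]; push_cast; ring
  have hbC : (b:ℂ) = (u₁:ℂ) * (m:ℂ) + (c:ℂ) := by exact_mod_cast congrArg Complex.ofReal hb'
  have hcC : (u₁:ℂ) * (c:ℂ) = 1 := by exact_mod_cast congrArg Complex.ofReal hc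
  -- factorisation of F
  have Ffact : ∀ z : ℂ, F z = (z - u₁) * (z - u₃) * (z - starRingEnd ℂ u₃) := by
    intro z
    unfold F
    linear_combination (z - (u₁:ℂ)) * z * hsum - (z - (u₁:ℂ)) * hprod + z^2 * hmC
      + z * hbC + hcC
  have Fclass : ∀ z : ℂ, F z = 0 → z = u₁ ∨ z = u₃ ∨ z = starRingEnd ℂ u₃ := by
    intro z hz
    rw [Ffact z] at hz
    rcases mul_eq_zero.mp hz with h | h
    · rcases mul_eq_zero.mp h with h' | h'
      · exact Or.inl (sub_eq_zero.mp h')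
      · exact Or.inr (Or.inl (sub_eq_zero.mp h'))
    · exact Or.inr (Or.inr (sub_eq_zero.mp h))
  have hu₃ne0 : u₃ ≠ 0 := by
    intro h
    have := him
    rw [h] at this
    simp at this
    exact absurd this.symm (ne_of_gt htpos)
  have hcu₃ne0 : starRingEnd ℂ u₃ ≠ 0 := by
    intro h
    rw [h] at hprod
    simp at hprod
    exact absurd hprod.symm (ne_of_gt (by exact_mod_cast hcpos : (0:ℂ).re < (c:ℂ).re) ∘ congrArg Complex.re) -- placeholder2
  -- real-root uniqueness for F
  have FrealRoot : ∀ x : ℝ, F (x:ℂ) = 0 → x = u₁ := by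
    intro x hx
    rcases Fclass _ hx with h | h | h
    · exact_mod_cast h
    · exfalso
      have := congrArg Complex.im h
      rw [him] at this
      simp at this
      exact absurd this.symm (ne_of_gt htpos)
    · exfalso
      have := congrArg Complex.im h
      rw [hconj] at this
      simp at this
      exact absurd this (ne_of_gt htpos)
  have hFu₁ : F (u₁:ℂ) = 0 := by
    rw [F_real, hfu₁]; simp
  have hFu₃ : F u₃ = 0 := by rw [Ffact]; ring
  have hFcu₃ : F (starRingEnd ℂ u₃) = 0 := by rw [Ffact]; ring
  -- roots of G are inverses of roots of F
  have Ginv : ∀ z : ℂ, z ≠ 0 → F z = 0 → G z⁻¹ = 0 := by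
    intro z hz hF
    rw [G_rec z⁻¹ (inv_ne_zero hz), inv_inv, hF]
    ring
  have hu₁C : (u₁:ℂ) ≠ 0 := by exact_mod_cast hu₁ne
  -- roots of P
  have rootF : ∀ z : ℂ, F z = 0 → IsRootP z := by
    intro z hz
    rw [isRootP_iff, hz]; ring
  have rootG : ∀ z : ℂ, G z = 0 → IsRootP z := by
    intro z hz
    rw [isRootP_iff, hz]; ring
  refine ⟨u₁, u₃, by linarith, rootF _ hFu₁, ?_, ?_, ?_, rootF _ hFu₃, rootF _ hFcu₃,
    ?_, ?_, ?_, ?_⟩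
  · -- IsRootP (u₁:ℂ)⁻¹
    exact rootG _ (Ginv _ hu₁C hFu₁)
  · -- real roots classification
    intro x hx
    rw [isRootP_iff] at hx
    rcases mul_eq_zero.mp hx with h | h
    · rcases mul_eq_zero.mp h with h' | h'
      · exact Or.inl (FrealRoot x h')
      · -- G (x:ℂ) = 0
        have hx0 : x ≠ 0 := by
          intro h0
          rw [h0] at h'
          rw [show ((0:ℝ):ℂ) = 0 by norm_num, G_zero] at h'
          norm_num at h'
        have hFinv : F ((x:ℂ))⁻¹ = 0 := by
          have h5 : -((x:ℂ))^3 * F ((x:ℂ))⁻¹ = 0 := by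
            rw [← G_rec (x:ℂ) (by exact_mod_cast hx0)]; exact h'
          rcases mul_eq_zero.mp h5 with h4 | h4
          · exact absurd h4 (neg_ne_zero.mpr (pow_ne_zero 3 (by exact_mod_cast hx0)))
          · exact h4
        have : ((x⁻¹:ℝ):ℂ) = ((x:ℂ))⁻¹ := by push_cast; ring
        rw [← this] at hFinv
        have := FrealRoot _ hFinv
        right
        rw [← this, inv_inv]
    · -- Uv (x:ℂ) = 0
      exfalso
      exact (Uroot _ h).2 (by simp)
  · -- im ≠ 0
    rw [him]; exact ne_of_gt htpos
  · -- IsRootP u₃⁻¹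
    exact rootG _ (Ginv _ hu₃ne0 hFu₃)
  · -- IsRootP (conj u₃)⁻¹
    exact rootG _ (Ginv _ hcu₃ne0 hFcu₃)
  · -- u₁ * u₃ * conj u₃ = 1
    rw [mul_assoc, hprod]; exact hcC
  · -- remaining roots have modulus 1
    intro z hz hz1 hz2 hz3 hz4 hz5 hz6
    rw [isRootP_iff] at hz
    rcases mul_eq_zero.mp hz with h | h
    · rcases mul_eq_zero.mp h with h' | h'
      · rcases Fclass _ h' with h'' | h'' | h''
        · exact absurd h'' hz1
        · exact absurd h'' hz3
        · exact absurd h'' hz4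
      · -- G z = 0
        have hz0 : z ≠ 0 := by
          intro h0; rw [h0, G_zero] at h'; norm_num at h'
        have hFinv : F z⁻¹ = 0 := by
          have h5 : -z^3 * F z⁻¹ = 0 := by
            rw [← G_rec z hz0]; exact h'
          rcases mul_eq_zero.mp h5 with h4 | h4
          · exact absurd h4 (neg_ne_zero.mpr (pow_ne_zero 3 hz0))
          · exact h4
        rcases Fclass _ hFinv with h'' | h'' | h''
        · exact absurd (by rw [← inv_inv z, h'']) hz2
        · exact absurd (by rw [← inv_inv z, h'']) hz5
        · exact absurd (by rw [← inv_inv z, h'']) hz6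
    · exact (Uroot _ h).1
end

section
/- Let s ≥ 1, let K be a number field of degree 3s with exactly s real embeddings and 2s complex (non-real) embeddings, with embeddings enumerated σ_1, …, σ_{3s} : K → ℂ so that σ_1, …, σ_s are the real embeddings and σ_{2s+j} = conj ∘ σ_{s+j} for j = 1, …, s. Let U ⊆ 𝓞_K^× be a subgroup which is admissible and satisfies the pluriclosed condition. Then every intermediate field K' of the extension K/ℚ that contains (the image in K of) every element of U equals K; equivalently, the subfield ℚ(U) of K generated by U over ℚ is K itself. -/
open NumberField

/-- A labeling of the embeddings of a number field `K` of degree `3s` with `s` real and `2s`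
complex (non-real) embeddings: an enumeration `σ 0, …, σ (3s-1)` of all field embeddings
`K → ℂ` such that `σ 0, …, σ (s-1)` are exactly the real embeddings and
`σ (2s+j) = conj ∘ σ (s+j)` for `j = 0, …, s-1`.  (Indices are `0`-based.) -/
structure EmbeddingLabeling (K : Type*) [Field K] (s : ℕ) where
  σ : ℕ → (K →+* ℂ)
  inj : ∀ i < 3 * s, ∀ j < 3 * s, σ i = σ j → i = j
  surj : ∀ φ : K →+* ℂ, ∃ i < 3 * s, σ i = φ
  isReal : ∀ i < s, ComplexEmbedding.IsReal (σ i)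
  notReal : ∀ i, s ≤ i → i < 3 * s → ¬ ComplexEmbedding.IsReal (σ i)
  conjRel : ∀ j < s, σ (2 * s + j) = ComplexEmbedding.conjugate (σ (s + j))

/-- A subgroup `U ≤ 𝓞_K^×` is *admissible* if it contains units `u 0, …, u (s-1)` for which
the `s×s` matrix `(log σ_j(u_i))` is nonsingular. -/
def IsAdmissible {K : Type*} [Field K] {s : ℕ}
    (L : EmbeddingLabeling K s) (U : Subgroup (𝓞 K)ˣ) : Prop :=
  ∃ u : Fin s → (𝓞 K)ˣ, (∀ i, u i ∈ U) ∧
    (Matrix.of fun i j : Fin s =>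
      Real.log ((L.σ j (algebraMap (𝓞 K) K (u i))).re)).det ≠ 0

/-- A subgroup `U ≤ 𝓞_K^×` satisfies the *pluriclosed condition* if
`σ_j(u)·|σ_{s+j}(u)|² = 1` for every `u ∈ U` and every `j ∈ {0,…,s-1}`. -/
def IsPluriclosed {K : Type*} [Field K] {s : ℕ}
    (L : EmbeddingLabeling K s) (U : Subgroup (𝓞 K)ˣ) : Prop :=
  ∀ u ∈ U, ∀ j < s, L.σ j (algebraMap (𝓞 K) K (u : (𝓞 K)ˣ)) *
    (‖L.σ (s + j) (algebraMap (𝓞 K) K (u : (𝓞 K)ˣ))‖ : ℂ) ^ 2 = 1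

/-- Let `s ≥ 1` and let `K` be a number field of degree `3s` with `s`
real and `2s` complex embeddings, labeled as above.  Let `U ≤ 𝓞_K^×` be admissible and
satisfy the pluriclosed condition.  Then every intermediate field of `K/ℚ` containing the
image in `K` of every element of `U` equals `K`; i.e. `ℚ(U) = K`. -/
theorem simple_type_of_pluriclosed
    (s : ℕ) (hs : 1 ≤ s)
    (K : Type*) [Field K] [NumberField K]
    (hdeg : Module.finrank ℚ K = 3 * s)
    (L : EmbeddingLabeling K s) (U : Subgroup (𝓞 K)ˣ)
    (hadm : IsAdmissible L U) (hpc : IsPluriclosed L U) :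
    ∀ K' : IntermediateField ℚ K,
      (∀ u ∈ U, algebraMap (𝓞 K) K (u : (𝓞 K)ˣ) ∈ K') → K' = ⊤ := by
  classical
  intro K' hK'
  by_contra hne
  obtain ⟨u, huU, hdet⟩ := hadm
  -- abbreviation for the image of a unit in `K`
  set A : (𝓞 K)ˣ → K := fun v => algebraMap (𝓞 K) K (v : (𝓞 K)ˣ) with hA
  -- real embeddings take real values
  have him : ∀ j < s, ∀ y : K, (L.σ j y).im = 0 := by
    intro j hj y
    have h := L.isReal j hj
    rw [ComplexEmbedding.isReal_iff] at h
    have h2 := RingHom.congr_fun h y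
    rw [ComplexEmbedding.conjugate_coe_eq] at h2
    exact Complex.conj_eq_iff_im.mp h2
  -- the basic real identity coming from the pluriclosed condition
  have hkey : ∀ v ∈ U, ∀ j, j < s →
      (L.σ j (A v)).re * (‖L.σ (s + j) (A v)‖) ^ 2 = 1 := by
    intro v hv j hj
    have h := hpc v hv j hj
    rw [← Complex.ofReal_pow] at h
    have h2 := congrArg Complex.re h
    simpa [Complex.mul_re, Complex.ofReal_re, Complex.ofReal_im, ← Complex.ofReal_pow,
      him j hj] using h2
  have hpos : ∀ v ∈ U, ∀ j, j < s → 0 < (L.σ j (A v)).re := by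
    intro v hv j hj
    have h := hkey v hv j hj
    nlinarith [sq_nonneg (‖L.σ (s + j) (A v)‖)]
  have hofReal : ∀ v ∈ U, ∀ j, j < s → L.σ j (A v) = ((L.σ j (A v)).re : ℂ) := by
    intro v hv j hj
    exact Complex.ext rfl (by simp [him j hj])
  -- K is finite dimensional over K'
  haveI hFD : FiniteDimensional K' K := FiniteDimensional.right ℚ K' K
  have h1lt : 1 < Module.finrank K' K := by
    have hpos' : 0 < Module.finrank K' K := Module.finrank_pos
    have hne1 : Module.finrank K' K ≠ 1 := by
      intro h1
      apply hne
      have hmul := Module.finrank_mul_finrank ℚ K' K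
      rw [h1, mul_one] at hmul
      have h4 : Subalgebra.toSubmodule K'.toSubalgebra = ⊤ :=
        Submodule.eq_top_of_finrank_eq (by
          rw [K'.toSubalgebra.finrank_toSubmodule]; exact hmul)
      have h5 : K'.toSubalgebra = ⊤ := Algebra.toSubmodule_eq_top.mp h4
      exact IntermediateField.toSubalgebra_injective
        (by rw [h5, IntermediateField.top_toSubalgebra])
    omega
  -- a second embedding of K agreeing with σ₀ on K'
  letI : Algebra K' ℂ := ((L.σ 0).comp (algebraMap K' K)).toAlgebra
  let e0 : K →ₐ[K'] ℂ := { toRingHom := L.σ 0, commutes' := fun r => rfl }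
  have hcard : 1 < Fintype.card (K →ₐ[K'] ℂ) := by
    rw [AlgHom.card]; exact h1lt
  obtain ⟨e, he⟩ := Fintype.exists_ne_of_one_lt_card hcard e0
  have hagree : ∀ v ∈ U, e.toRingHom (A v) = L.σ 0 (A v) := by
    intro v hv
    have hvK : A v ∈ K' := hK' v hv
    calc e.toRingHom (A v) = e (algebraMap K' K ⟨A v, hvK⟩) := rfl
      _ = algebraMap K' ℂ ⟨A v, hvK⟩ := e.commutes _
      _ = L.σ 0 (A v) := by rw [RingHom.algebraMap_toAlgebra]; rfl
  obtain ⟨k, hk3, hk⟩ := L.surj e.toRingHom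
  have hk0 : k ≠ 0 := by
    rintro rfl
    exact he (AlgHom.ext fun x => (RingHom.congr_fun hk x).symm)
  -- the distinguished index 0 in `Fin s`
  have hz : (0 : ℕ) < s := hs
  set z : Fin s := ⟨0, hz⟩ with hzdef
  -- it suffices to exhibit a nontrivial kernel vector of the matrix
  apply hdet
  rw [← Matrix.exists_mulVec_eq_zero_iff]
  rcases Nat.lt_or_ge k s with hks | hks
  · -- case: the second embedding is one of the real embeddings σ_k with k ≠ 0
    have hkz : (⟨k, hks⟩ : Fin s) ≠ z := by
      intro h; exact hk0 (congrArg Fin.val h)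
    refine ⟨Pi.single z 1 + Pi.single (⟨k, hks⟩ : Fin s) (-1), ?_, ?_⟩
    · intro hc
      have h0 := congrFun hc z
      rw [Pi.add_apply, Pi.single_eq_same, Pi.single_eq_of_ne hkz.symm] at h0
      norm_num at h0
    · funext i
      have hcol : L.σ k (A (u i)) = L.σ 0 (A (u i)) := by
        rw [hk]; exact hagree (u i) (huU i)
      simp only [hA] at hcol
      simp [Matrix.mulVec, hA, hcol, hzdef]
  · -- case: the second embedding is a complex embedding σ_{s+j} or its conjugate
    -- in either case |σ_{s+j}(v)| = σ_0(v) on U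
    obtain ⟨j, hjs, habs⟩ : ∃ j, j < s ∧ ∀ i : Fin s,
        ‖L.σ (s + j) (A (u i))‖ = (L.σ 0 (A (u i))).re := by
      rcases Nat.lt_or_ge k (2 * s) with hk2 | hk2
      · refine ⟨k - s, by omega, fun i => ?_⟩
        have h1 : L.σ (s + (k - s)) (A (u i)) = L.σ 0 (A (u i)) := by
          rw [show s + (k - s) = k from by omega, hk]
          exact hagree (u i) (huU i)
        rw [h1, hofReal (u i) (huU i) 0 hs, Complex.norm_real, Real.norm_eq_abs,
          abs_of_pos (hpos (u i) (huU i) 0 hs), Complex.ofReal_re]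
      · refine ⟨k - 2 * s, by omega, fun i => ?_⟩
        have h2 := L.conjRel (k - 2 * s) (by omega)
        rw [show 2 * s + (k - 2 * s) = k from by omega] at h2
        have h3 : (starRingEnd ℂ) (L.σ (s + (k - 2 * s)) (A (u i))) = L.σ 0 (A (u i)) := by
          have h4 := RingHom.congr_fun (h2.symm.trans hk) (A (u i))
          rw [ComplexEmbedding.conjugate_coe_eq] at h4
          rw [h4]; exact hagree (u i) (huU i)
        have h5 : ‖L.σ (s + (k - 2 * s)) (A (u i))‖
            = ‖L.σ 0 (A (u i))‖ := by
          rw [← h3, Complex.norm_conj]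
        rw [h5, hofReal (u i) (huU i) 0 hs, Complex.norm_real, Real.norm_eq_abs,
          abs_of_pos (hpos (u i) (huU i) 0 hs), Complex.ofReal_re]
    -- the log relation: log x_j + 2 log x_0 = 0
    have hrel : ∀ i : Fin s, Real.log ((L.σ j (A (u i))).re)
        + 2 * Real.log ((L.σ 0 (A (u i))).re) = 0 := by
      intro i
      have hk1 := hkey (u i) (huU i) j hjs
      rw [habs i] at hk1
      have p0 := hpos (u i) (huU i) 0 hs
      have pj := hpos (u i) (huU i) j hjs
      have h0 : Real.log ((L.σ j (A (u i))).re * ((L.σ 0 (A (u i))).re) ^ 2) = 0 := by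
        rw [hk1, Real.log_one]
      rw [Real.log_mul (ne_of_gt pj) (by positivity), Real.log_pow] at h0
      push_cast at h0
      linarith
    by_cases hj0 : j = 0
    · -- then 3 log x_0 = 0, so the 0-th column vanishes
      refine ⟨Pi.single z 1, ?_, ?_⟩
      · intro hc
        have h0 := congrFun hc z
        rw [Pi.single_eq_same] at h0
        norm_num at h0
      · funext i
        have := hrel i
        rw [hj0] at this
        have hz0 : Real.log ((L.σ 0 (A (u i))).re) = 0 := by linarith
        simp only [hA] at hz0
        simp [Matrix.mulVec, hA, hz0, hzdef]
    · -- otherwise columns j and 0 are linearly dependent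
      have hjz : (⟨j, hjs⟩ : Fin s) ≠ z := by
        intro h; exact hj0 (congrArg Fin.val h)
      refine ⟨Pi.single z 2 + Pi.single (⟨j, hjs⟩ : Fin s) 1, ?_, ?_⟩
      · intro hc
        have h0 := congrFun hc z
        rw [Pi.add_apply, Pi.single_eq_same, Pi.single_eq_of_ne hjz.symm] at h0
        norm_num at h0
      · funext i
        have := hrel i
        simp only [Matrix.mulVec_add, Pi.add_apply]
        simp [Matrix.mulVec, hA]
        linarith
end
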